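/- arXiv:2505.12893 — 9 statements merged into one kernel-verified Lean document; each statement's English description precedes it below -/
import Mathlib

section
/- Let I ⊆ J be a finite set of complex numbers maximizing |∑_{λ∈I} λ| over all subsets of J, and suppose η ∈ J with −η ∈ J and η ≠ 0. Then I contains exactly one of the numbers η, −η. -/
lemma aux_para (m e : ℂ) (he : e ≠ 0) :
    ‖m‖ < ‖m + e‖ ∨ ‖m‖ < ‖m - e‖ := by
  by_contra h
  push_neg at h
  obtain ⟨h1, h2⟩ := h
  have hp : ‖m + e‖ ^ 2 + ‖m - e‖ ^ 2
      = 2 * ‖m‖ ^ 2 + 2 * ‖e‖ ^ 2 := by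
    simp only [Complex.sq_norm, Complex.normSq_apply, Complex.add_re, Complex.add_im,
      Complex.sub_re, Complex.sub_im]
    ring
  have he' : 0 < ‖e‖ := by simpa using he
  nlinarith [norm_nonneg (m + e), norm_nonneg (m - e), norm_nonneg m]

/-- If `I ⊆ J` maximizes `|∑_{λ∈I} λ|` among subsets of a finite set `J ⊆ ℂ` which is closed
under negation and does not contain `0`, then for every `η ∈ J`, the set `I` contains exactly
one of the numbers `η`, `-η`. -/
theorem stmt3 (J I : Finset ℂ) (hIJ : I ⊆ J)
    (hneg : ∀ l ∈ J, -l ∈ J) (h0 : (0 : ℂ) ∉ J)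
    (hmax : ∀ I' ⊆ J, ‖∑ l ∈ I', l‖ ≤ ‖∑ l ∈ I, l‖)
    (η : ℂ) (hη : η ∈ J) :
    (η ∈ I ∧ -η ∉ I) ∨ (η ∉ I ∧ -η ∈ I) := by
  have hη0 : η ≠ 0 := fun h => h0 (h ▸ hη)
  have hne : η ≠ -η := by
    intro h
    apply hη0
    have : (2 : ℂ) * η = 0 := by linear_combination h
    simpa using this
  by_contra hcon
  push_neg at hcon
  obtain ⟨hc1, hc2⟩ := hcon
  by_cases hmem : η ∈ I
  · -- both η and -η in I
    have hmem' : -η ∈ I := hc1 hmem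
    set I' := (I.erase η).erase (-η) with hI'
    have hηI' : η ∉ I' := fun h => (Finset.mem_erase.mp (Finset.mem_of_mem_erase h)).1 rfl
    have hηI'' : -η ∉ I' := fun h => (Finset.mem_erase.mp h).1 rfl
    have hmem'' : -η ∈ I.erase η := Finset.mem_erase.mpr ⟨(Ne.symm hne), hmem'⟩
    set μ := ∑ l ∈ I', l with hμ
    have hsum : ∑ l ∈ I, l = μ := by
      rw [← Finset.add_sum_erase I _ hmem, ← Finset.add_sum_erase (I.erase η) _ hmem'']
      ring_nf
      rfl
    have hsub : I' ⊆ I := (Finset.erase_subset _ _).trans (Finset.erase_subset _ _)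
    have h1 : insert η I' ⊆ J := by
      intro x hx
      rcases Finset.mem_insert.mp hx with rfl | hx
      · exact hη
      · exact hIJ (hsub hx)
    have h2 : insert (-η) I' ⊆ J := by
      intro x hx
      rcases Finset.mem_insert.mp hx with rfl | hx
      · exact hneg η hη
      · exact hIJ (hsub hx)
    have s1 : ∑ l ∈ insert η I', l = μ + η := by
      rw [Finset.sum_insert hηI']; ring
    have s2 : ∑ l ∈ insert (-η) I', l = μ - η := by
      rw [Finset.sum_insert hηI'']; ring
    rcases aux_para μ η hη0 with h | h
    · have := hmax _ h1
      rw [s1, hsum] at this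
      exact absurd this (not_le.mpr h)
    · have := hmax _ h2
      rw [s2, hsum] at this
      exact absurd this (not_le.mpr h)
  · -- neither in I
    have hmem' : -η ∉ I := hc2 hmem
    set μ := ∑ l ∈ I, l with hμ
    have h1 : insert η I ⊆ J := by
      intro x hx
      rcases Finset.mem_insert.mp hx with rfl | hx
      · exact hη
      · exact hIJ hx
    have h2 : insert (-η) I ⊆ J := by
      intro x hx
      rcases Finset.mem_insert.mp hx with rfl | hx
      · exact hneg η hη
      · exact hIJ hx
    have s1 : ∑ l ∈ insert η I, l = μ + η := by
      rw [Finset.sum_insert hmem]; ring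
    have s2 : ∑ l ∈ insert (-η) I, l = μ - η := by
      rw [Finset.sum_insert hmem']; ring
    rcases aux_para μ η hη0 with h | h
    · have := hmax _ h1
      rw [s1] at this
      exact absurd this (not_le.mpr h)
    · have := hmax _ h2
      rw [s2] at this
      exact absurd this (not_le.mpr h)
end

section
/- Let X be a Banach space and (x_n) a bounded sequence satisfying the lower ℓ₁-estimate ‖∑_{j=1}^n α_j x_j‖ ≥ c ∑_{j=1}^n |α_j| for all n and scalars α_j, where c > 0. Then for any scalars a, b, every weak*-cluster point of the sequence (a x_1 + b x_n)_n in the bidual X** has norm at least c(|a| + |b|). -/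
open NormedSpace Filter

set_option maxHeartbeats 1000000 in
/-- If a bounded sequence `(x_n)` in a Banach space satisfies the lower `ℓ₁`-estimate
`‖∑ α_j x_j‖ ≥ c ∑ |α_j|` with `c > 0`, then for any scalars `a, b`, every weak*-cluster
point of the sequence `(a x_1 + b x_n)_n` in the bidual has norm at least `c(|a| + |b|)`. -/
theorem stmt6 {𝕜 : Type*} [RCLike 𝕜] {X : Type*} [NormedAddCommGroup X] [NormedSpace 𝕜 X]
    [CompleteSpace X] (x : ℕ → X) (hb : ∃ M : ℝ, ∀ n, ‖x n‖ ≤ M) (c : ℝ) (hc : 0 < c)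
    (hl : ∀ (n : ℕ) (α : Fin n → 𝕜), c * ∑ j, ‖α j‖ ≤ ‖∑ j, α j • x (j : ℕ)‖)
    (a b : 𝕜) (G : StrongDual 𝕜 (StrongDual 𝕜 X))
    (hG : MapClusterPt (StrongDual.toWeakDual G) Filter.atTop
      (fun n => StrongDual.toWeakDual
        (NormedSpace.inclusionInDoubleDual 𝕜 X (a • x 0 + b • x n)))) :
    c * (‖a‖ + ‖b‖) ≤ ‖G‖ := by
  classical
  -- Finsupp version of the lower estimate
  have hl' : ∀ g : ℕ →₀ 𝕜, c * (g.sum fun _ α => ‖α‖) ≤ ‖g.sum fun j α => α • x j‖ := by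
    intro g
    set n := (g.support.sup id) + 1 with hn
    have hsub : g.support ⊆ Finset.range n := by
      intro j hj
      exact Finset.mem_range.2 (Nat.lt_succ_of_le (Finset.le_sup (f := id) hj))
    have h1 : (g.sum fun _ α => ‖α‖) = ∑ j : Fin n, ‖g (j : ℕ)‖ := by
      rw [Finsupp.sum, Finset.sum_subset hsub (by
        intro j _ hj
        simp [Finsupp.notMem_support_iff.1 hj])]
      exact (Fin.sum_univ_eq_sum_range (fun j => ‖g j‖) n).symm
    have h2 : (g.sum fun j α => α • x j) = ∑ j : Fin n, g (j : ℕ) • x (j : ℕ) := by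
      rw [Finsupp.sum, Finset.sum_subset hsub (by
        intro j _ hj
        simp [Finsupp.notMem_support_iff.1 hj])]
      exact (Fin.sum_univ_eq_sum_range (fun j => g j • x j) n).symm
    rw [h1, h2]
    exact hl n (fun j => g (j : ℕ))
  -- linear independence
  have hli : LinearIndependent 𝕜 x := by
    rw [linearIndependent_iff]
    intro l hl0
    have hnorm : Finsupp.linearCombination 𝕜 x l = l.sum fun j α => α • x j :=
      Finsupp.linearCombination_apply _ _
    have h0 := hl' l
    rw [← hnorm, hl0, norm_zero] at h0
    have hs0 : (l.sum fun _ α => ‖α‖) ≤ 0 := by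
      nlinarith [h0]
    have hsum0 : ∀ j ∈ l.support, ‖l j‖ = 0 := by
      rw [Finsupp.sum] at hs0
      intro j hj
      exact le_antisymm (by
        have := Finset.sum_le_sum_of_subset_of_nonneg (Finset.singleton_subset_iff.2 hj)
          (fun i _ _ => norm_nonneg (l i))
        simp only [Finset.sum_singleton] at this
        linarith) (norm_nonneg _)
    ext j
    by_cases hj : j ∈ l.support
    · simpa using norm_eq_zero.1 (hsum0 j hj)
    · simpa using Finsupp.notMem_support_iff.1 hj
  -- unimodular signs
  set u : ℕ → 𝕜 := fun j =>
    if j = 0 then (if a = 0 then 1 else (starRingEnd 𝕜) a / (‖a‖ : 𝕜))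
    else (if b = 0 then 1 else (starRingEnd 𝕜) b / (‖b‖ : 𝕜)) with hu_def
  have hu : ∀ j, ‖u j‖ = 1 := by
    intro j
    simp only [hu_def]
    split_ifs with h1 h2 h3
    · simp
    · rw [norm_div, RCLike.norm_conj]
      simp [norm_ne_zero_iff.2 h2]
    · simp
    · rw [norm_div, RCLike.norm_conj]
      simp [norm_ne_zero_iff.2 h3]
  have hau : a * u 0 = (‖a‖ : 𝕜) := by
    simp only [hu_def, if_pos rfl]
    split_ifs with h
    · simp [h]
    · rw [mul_div_assoc']
      rw [RCLike.mul_conj]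
      rw [sq]
      rw [mul_div_assoc]
      rw [div_self (by exact_mod_cast norm_ne_zero_iff.2 h), mul_one]
  have hbu : ∀ n : ℕ, n ≠ 0 → b * u n = (‖b‖ : 𝕜) := by
    intro n hn
    simp only [hu_def, if_neg hn]
    split_ifs with h
    · simp [h]
    · rw [mul_div_assoc', RCLike.mul_conj, sq, mul_div_assoc,
        div_self (by exact_mod_cast norm_ne_zero_iff.2 h), mul_one]
  -- the functional on the span
  set p : Submodule 𝕜 X := Submodule.span 𝕜 (Set.range x) with hp_def
  let B : Module.Basis ℕ 𝕜 p := Module.Basis.span hli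
  let φ : p →ₗ[𝕜] 𝕜 := B.constr 𝕜 (fun j => (c : 𝕜) * u j)
  have hmemx : ∀ j, x j ∈ p := fun j => Submodule.subset_span ⟨j, rfl⟩
  have hφx : ∀ j, φ ⟨x j, hmemx j⟩ = (c : 𝕜) * u j := by
    intro j
    have hB : (⟨x j, hmemx j⟩ : p) = B j := (Module.Basis.span_apply hli j).symm
    rw [hB]
    exact B.constr_basis 𝕜 _ j
  have hφbound : ∀ y : p, ‖φ y‖ ≤ 1 * ‖y‖ := by
    intro y
    have hrepr : ((y : X)) = (B.repr y).sum fun j α => α • x j := by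
      conv_lhs => rw [← B.linearCombination_repr y]
      rw [Finsupp.linearCombination_apply, Finsupp.sum, Finsupp.sum,
        AddSubmonoidClass.coe_finset_sum]
      refine Finset.sum_congr rfl fun j _ => ?_
      rw [SetLike.val_smul]
      congr 1
      exact congrArg Subtype.val (Module.Basis.span_apply hli j)
    have hφy : φ y = (B.repr y).sum fun j α => α • ((c : 𝕜) * u j) :=
      B.constr_apply 𝕜 _ y
    have key : ‖φ y‖ ≤ c * ((B.repr y).sum fun _ α => ‖α‖) := by
      rw [hφy, Finsupp.sum, Finsupp.sum, Finset.mul_sum]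
      refine (norm_sum_le _ _).trans (le_of_eq (Finset.sum_congr rfl fun j _ => ?_))
      rw [smul_eq_mul, norm_mul, norm_mul, hu j, mul_one, RCLike.norm_ofReal,
        abs_of_pos hc, mul_comm]
    have key2 : c * ((B.repr y).sum fun _ α => ‖α‖) ≤ ‖(y : X)‖ := by
      have := hl' (B.repr y)
      rwa [← hrepr] at this
    rw [one_mul]
    exact key.trans key2
  -- extend by Hahn-Banach
  let f0 : p →L[𝕜] 𝕜 := LinearMap.mkContinuous φ 1 hφbound
  have hf0 : ‖f0‖ ≤ 1 := LinearMap.mkContinuous_norm_le φ zero_le_one hφbound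
  obtain ⟨f, hfext, hfnorm⟩ := exists_extension_norm_eq p f0
  have hfx : ∀ j, f (x j) = (c : 𝕜) * u j := by
    intro j
    have := hfext ⟨x j, hmemx j⟩
    rw [this]
    exact hφx j
  -- value on the sequence
  have hval : ∀ n : ℕ, n ≠ 0 →
      f (a • x 0 + b • x n) = ((c * (‖a‖ + ‖b‖) : ℝ) : 𝕜) := by
    intro n hn
    have e1 : a * ((c:𝕜) * u 0) = (c:𝕜) * (‖a‖:𝕜) := by
      rw [mul_comm a, mul_assoc, mul_comm (u 0) a, hau]
    have e2 : b * ((c:𝕜) * u n) = (c:𝕜) * (‖b‖:𝕜) := by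
      rw [mul_comm b, mul_assoc, mul_comm (u n) b, hbu n hn]
    rw [map_add, map_smul, map_smul, hfx 0, hfx n, smul_eq_mul, smul_eq_mul, e1, e2]
    push_cast
    ring
  -- cluster point of evaluation
  have hev : MapClusterPt (G f) atTop
      (fun n => (NormedSpace.inclusionInDoubleDual 𝕜 X (a • x 0 + b • x n)) f) := by
    have hc' : ContinuousAt (fun g : WeakDual 𝕜 (StrongDual 𝕜 X) => g f)
        (StrongDual.toWeakDual G) := (WeakDual.eval_continuous f).continuousAt
    exact MapClusterPt.continuousAt_comp hc' hG
  have htend : Tendsto (fun n => (NormedSpace.inclusionInDoubleDual 𝕜 X (a • x 0 + b • x n)) f)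
      atTop (nhds ((c * (‖a‖ + ‖b‖) : ℝ) : 𝕜)) := by
    refine Tendsto.congr' ?_ tendsto_const_nhds
    filter_upwards [eventually_ne_atTop 0] with n hn
    rw [NormedSpace.dual_def]
    exact (hval n hn).symm
  have hGf : G f = ((c * (‖a‖ + ‖b‖) : ℝ) : 𝕜) := by
    have h1 : ClusterPt (G f)
        (Filter.map (fun n => (NormedSpace.inclusionInDoubleDual 𝕜 X (a • x 0 + b • x n)) f)
          atTop) := hev
    have h2 : (nhds (G f)) ⊓ nhds ((c * (‖a‖ + ‖b‖) : ℝ) : 𝕜) |>.NeBot :=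
      h1.neBot.mono (inf_le_inf_left _ htend)
    exact eq_of_nhds_neBot h2
  -- conclude
  have hnormGf : ‖G f‖ = c * (‖a‖ + ‖b‖) := by
    rw [hGf, RCLike.norm_ofReal, abs_of_nonneg]
    positivity
  calc c * (‖a‖ + ‖b‖) = ‖G f‖ := hnormGf.symm
    _ ≤ ‖G‖ * ‖f‖ := G.le_opNorm f
    _ ≤ ‖G‖ * 1 := by
        refine mul_le_mul_of_nonneg_left ?_ (norm_nonneg G)
        rw [hfnorm]
        exact hf0
    _ = ‖G‖ := mul_one _
end

section
/- Let X be a Banach space, (x_n) a bounded sequence in X, x ∈ X with x ≠ 0, and c > 0. Assume that for every y in the linear span of {x} ∪ {x_n : n ∈ ℕ} one has lim_n ‖x_n + y‖ = c + ‖y‖. Then for every ε > 0 there is a subsequence (x_{n_k}) such that the sequence x/‖x‖, x_{n_1}/c, x_{n_2}/c, x_{n_3}/c, … is ε-isometrically equivalent to the canonical basis of ℓ₁, i.e., (1−ε)∑|α_j| ≤ ‖α_0 x/‖x‖ + ∑_{k} α_k x_{n_k}/c‖ ≤ (1+ε)∑|α_j| for all finitely supported scalars. -/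
open Filter

section auxlemmas

variable {𝕜 : Type*} [RCLike 𝕜] {X : Type*} [NormedAddCommGroup X] [NormedSpace 𝕜 X]

private lemma aux_prod_ge (N : ℕ) (d : ℕ → ℝ) (h0 : ∀ j, 0 ≤ d j) (h1 : ∀ j, d j ≤ 1) :
    1 - ∑ j ∈ Finset.range N, d j ≤ ∏ j ∈ Finset.range N, (1 - d j) := by
  induction N with
  | zero => simp
  | succ N ih =>
    rw [Finset.prod_range_succ, Finset.sum_range_succ]
    have hS : 0 ≤ ∑ j ∈ Finset.range N, d j := Finset.sum_nonneg fun j _ => h0 j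
    nlinarith [h0 N, h1 N]

private lemma aux_net (x : ℕ → X) (c : ℝ) (W : Submodule 𝕜 X) [FiniteDimensional 𝕜 W]
    (hW : ∀ y ∈ W, Tendsto (fun n => ‖x n + y‖) atTop (nhds (c + ‖y‖)))
    (δ R : ℝ) (hδ : 0 < δ) :
    ∃ N : ℕ, ∀ n, N ≤ n → ∀ z ∈ W, ‖z‖ ≤ R → c + ‖z‖ - δ ≤ ‖x n + z‖ := by
  have hcomp : IsCompact (Subtype.val '' (Metric.closedBall (0 : W) R)) :=
    (isCompact_closedBall (0 : W) R).image continuous_subtype_val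
  have hcover : Subtype.val '' (Metric.closedBall (0 : W) R) ⊆
      ⋃ z ∈ Subtype.val '' (Metric.closedBall (0 : W) R), Metric.ball z (δ/3) := fun z hz =>
    Set.mem_biUnion hz (Metric.mem_ball_self (by linarith))
  obtain ⟨t, hts, htfin, htcover⟩ :=
    hcomp.elim_finite_subcover_image (fun z _ => Metric.isOpen_ball) hcover
  have hev : ∀ᶠ n in atTop, ∀ z ∈ t, c + ‖z‖ - δ/3 ≤ ‖x n + z‖ := by
    rw [Set.Finite.eventually_all htfin]
    intro z hz
    have hzW : z ∈ W := by
      obtain ⟨w, -, rfl⟩ := hts hz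
      exact w.2
    exact (hW z hzW).eventually (eventually_ge_nhds (by linarith))
  obtain ⟨N, hN⟩ := eventually_atTop.1 hev
  refine ⟨N, fun n hn z' hz' hz'R => ?_⟩
  have hz'S : z' ∈ Subtype.val '' (Metric.closedBall (0 : W) R) :=
    ⟨⟨z', hz'⟩, mem_closedBall_zero_iff.2 hz'R, rfl⟩
  obtain ⟨z, hzt, hzball⟩ := Set.mem_iUnion₂.1 (htcover hz'S)
  have hd : ‖z' - z‖ < δ/3 := by rwa [Metric.mem_ball, dist_eq_norm] at hzball
  have h1 := hN n hn z hzt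
  have h2 : ‖x n + z‖ - ‖x n + z'‖ ≤ ‖z - z'‖ := by
    have h := norm_sub_norm_le (x n + z) (x n + z')
    simpa [add_sub_add_left_eq_sub] using h
  have h3 : ‖z'‖ - ‖z‖ ≤ ‖z' - z‖ := norm_sub_norm_le _ _
  have h4 : ‖z - z'‖ = ‖z' - z‖ := norm_sub_rev _ _
  linarith

private lemma aux_A (x : ℕ → X) (M c : ℝ) (hM : ∀ n, ‖x n‖ ≤ M) (hc : 0 < c)
    (W : Submodule 𝕜 X) [FiniteDimensional 𝕜 W]
    (hW : ∀ y ∈ W, Tendsto (fun n => ‖x n + y‖) atTop (nhds (c + ‖y‖)))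
    (δ : ℝ) (hδ : 0 < δ) (hδ1 : δ ≤ 1) :
    ∃ N : ℕ, ∀ n, N ≤ n → ∀ y ∈ W, ∀ α : 𝕜,
      (1 - δ) * (‖y‖ + ‖α‖ * c) ≤ ‖y + α • x n‖ := by
  have hM0 : 0 ≤ M := le_trans (norm_nonneg (x 0)) (hM 0)
  obtain ⟨N, hN⟩ := aux_net x c W hW (δ * c) ((M + c)/δ) (by positivity)
  refine ⟨N, fun n hn y hy α => ?_⟩
  rcases eq_or_ne α 0 with rfl | hα
  · have hy0 := norm_nonneg y
    simp only [norm_zero, zero_mul, add_zero, zero_smul]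
    nlinarith
  rcases le_or_gt (‖α‖ * (M + c)) (δ * ‖y‖) with hcase | hcase
  · have h1 : ‖y‖ - ‖α • x n‖ ≤ ‖y + α • x n‖ := by
      have h := norm_sub_norm_le y (-(α • x n))
      simpa using h
    have h2 : ‖α • x n‖ ≤ ‖α‖ * M := by
      rw [norm_smul]; exact mul_le_mul_of_nonneg_left (hM n) (norm_nonneg α)
    nlinarith [norm_nonneg y, norm_nonneg α,
      mul_nonneg (mul_nonneg hδ.le (norm_nonneg α)) hc.le]
  · have hα' : 0 < ‖α‖ := norm_pos_iff.2 hα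
    have hzW : α⁻¹ • y ∈ W := W.smul_mem _ hy
    have hyz : ‖y‖ = ‖α‖ * ‖α⁻¹ • y‖ := by
      rw [norm_smul, norm_inv]; field_simp
    have hzR : ‖α⁻¹ • y‖ ≤ (M + c)/δ := by
      rw [le_div_iff₀ hδ]
      nlinarith
    have h1 := hN n hn _ hzW hzR
    have he : y + α • x n = α • (x n + α⁻¹ • y) := by
      rw [smul_add, smul_inv_smul₀ hα, add_comm]
    rw [he, norm_smul, hyz]
    nlinarith [mul_le_mul_of_nonneg_left h1 (norm_nonneg α), norm_nonneg (α⁻¹ • y),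
      mul_nonneg (mul_nonneg hδ.le hα'.le) (norm_nonneg (α⁻¹ • y))]

end auxlemmas

/-- If `(x_n)` is bounded, `x ≠ 0`, `c > 0` and `lim_n ‖x_n + y‖ = c + ‖y‖` for every `y`
in the span of `{x} ∪ {x_n}`, then for every `ε > 0` there is a subsequence `(x_{n_k})` such
that `x/‖x‖, x_{n_1}/c, x_{n_2}/c, …` is `ε`-isometrically equivalent to the canonical basis
of `ℓ₁`. -/
theorem stmt7 {𝕜 : Type*} [RCLike 𝕜] {X : Type*} [NormedAddCommGroup X] [NormedSpace 𝕜 X]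
    [CompleteSpace X] (x : ℕ → X) (hb : ∃ M : ℝ, ∀ n, ‖x n‖ ≤ M)
    (x₀ : X) (hx₀ : x₀ ≠ 0) (c : ℝ) (hc : 0 < c)
    (h : ∀ y ∈ Submodule.span 𝕜 ({x₀} ∪ Set.range x),
      Filter.Tendsto (fun n => ‖x n + y‖) Filter.atTop (nhds (c + ‖y‖)))
    (ε : ℝ) (hε : 0 < ε) :
    ∃ φ : ℕ → ℕ, StrictMono φ ∧
      ∀ (N : ℕ) (β : 𝕜) (α : Fin N → 𝕜),
        (1 - ε) * (‖β‖ + ∑ j, ‖α j‖) ≤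
            ‖β • (((‖x₀‖⁻¹ : ℝ) : 𝕜) • x₀) + ∑ j, α j • (((c⁻¹ : ℝ) : 𝕜) • x (φ j))‖ ∧
        ‖β • (((‖x₀‖⁻¹ : ℝ) : 𝕜) • x₀) + ∑ j, α j • (((c⁻¹ : ℝ) : 𝕜) • x (φ j))‖ ≤
            (1 + ε) * (‖β‖ + ∑ j, ‖α j‖) := by
  classical
  obtain ⟨M₀, hM₀⟩ := hb
  have hM : ∀ n, ‖x n‖ ≤ max M₀ 0 := fun n => le_max_of_le_left (hM₀ n)
  set M : ℝ := max M₀ 0 with hM_def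
  set ε' : ℝ := min ε (1/2) with hε'_def
  have hε'0 : 0 < ε' := lt_min hε (by norm_num)
  have hε'2 : ε' ≤ 1/2 := min_le_right _ _
  have hε'ε : ε' ≤ ε := min_le_left _ _
  set D : ℕ → ℝ := fun k => ε' * (1/2) ^ (k + 2) with hD_def
  have hD0 : ∀ k, 0 < D k := fun k => by
    rw [hD_def]; positivity
  have hD1 : ∀ k, D k ≤ 1 := by
    intro k
    have hp : (1/2 : ℝ) ^ (k + 2) ≤ 1 := pow_le_one₀ (by norm_num) (by norm_num)
    have hp0 : (0:ℝ) ≤ (1/2 : ℝ) ^ (k + 2) := by positivity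
    rw [hD_def]
    nlinarith
  -- subspaces
  set Wsub : ℕ → Submodule 𝕜 X := fun m => Submodule.span 𝕜 ({x₀} ∪ x '' Set.Iic m)
    with hWsub_def
  have hWfin : ∀ m, FiniteDimensional 𝕜 (Wsub m) := fun m =>
    FiniteDimensional.span_of_finite 𝕜 ((Set.finite_singleton x₀).union
      ((Set.finite_Iic m).image x))
  have hWle : ∀ m, Wsub m ≤ Submodule.span 𝕜 ({x₀} ∪ Set.range x) := fun m =>
    Submodule.span_mono (Set.union_subset_union_right _ (Set.image_subset_range x _))
  have hWten : ∀ m, ∀ y ∈ Wsub m,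
      Tendsto (fun n => ‖x n + y‖) atTop (nhds (c + ‖y‖)) :=
    fun m y hy => h y (hWle m hy)
  have hx₀mem : ∀ m, x₀ ∈ Wsub m := fun m =>
    Submodule.subset_span (Or.inl rfl)
  -- eventual norm bound
  have hcc : c < (1 + ε') * c := by nlinarith
  have hxnorm : ∀ᶠ n in atTop, ‖x n‖ ≤ (1 + ε') * c := by
    have h0 := h 0 (Submodule.zero_mem _)
    simp only [add_zero, norm_zero] at h0
    exact h0.eventually (eventually_le_nhds hcc)
  obtain ⟨N₂, hN₂⟩ := eventually_atTop.1 hxnorm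
  -- the choice function
  have H : ∀ k m : ℕ, ∃ n : ℕ, m < n ∧ ‖x n‖ ≤ (1 + ε') * c ∧
      ∀ y ∈ Wsub m, ∀ α : 𝕜, (1 - D k) * (‖y‖ + ‖α‖ * c) ≤ ‖y + α • x n‖ := by
    intro k m
    haveI := hWfin m
    obtain ⟨N₁, hN₁⟩ := aux_A x M c hM hc (Wsub m) (hWten m) (D k) (hD0 k) (hD1 k)
    exact ⟨max (m + 1) (max N₁ N₂),
      lt_of_lt_of_le (Nat.lt_succ_self m) (le_max_left _ _),
      hN₂ _ (le_trans (le_max_right _ _) (le_max_right _ _)),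
      hN₁ _ (le_trans (le_max_left _ _) (le_max_right _ _))⟩
  choose G hG1 hG2 hG3 using H
  obtain ⟨φ, hφ0, hφs⟩ : ∃ φ : ℕ → ℕ, φ 0 = G 0 0 ∧ ∀ k, φ (k + 1) = G (k + 1) (φ k) :=
    ⟨fun k => Nat.rec (G 0 0) (fun k ih => G (k + 1) ih) k, rfl, fun k => rfl⟩
  have hφmono : StrictMono φ := strictMono_nat_of_lt_succ fun k => by
    rw [hφs]; exact hG1 _ _
  have hφnorm : ∀ k, ‖x (φ k)‖ ≤ (1 + ε') * c := by
    intro k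
    cases k with
    | zero => rw [hφ0]; exact hG2 _ _
    | succ k => rw [hφs]; exact hG2 _ _
  have key : ∀ N : ℕ, ∃ m : ℕ, φ N = G N m ∧ x₀ ∈ Wsub m ∧
      ∀ j, j < N → x (φ j) ∈ Wsub m := by
    intro N
    cases N with
    | zero => exact ⟨0, hφ0, hx₀mem 0, fun j hj => absurd hj (Nat.not_lt_zero j)⟩
    | succ N =>
      refine ⟨φ N, hφs N, hx₀mem _, fun j hj => ?_⟩
      exact Submodule.subset_span (Or.inr ⟨φ j, hφmono.monotone (Nat.lt_succ_iff.1 hj), rfl⟩)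
  -- norms of the basic vectors
  have hu : ‖(((‖x₀‖⁻¹ : ℝ) : 𝕜) • x₀)‖ = 1 := by
    rw [norm_smul, RCLike.norm_ofReal, abs_inv, abs_norm,
      inv_mul_cancel₀ (norm_ne_zero_iff.2 hx₀)]
  have hv : ∀ k, ‖(((c⁻¹ : ℝ) : 𝕜) • x (φ k))‖ ≤ 1 + ε' := by
    intro k
    rw [norm_smul, RCLike.norm_ofReal, abs_inv, abs_of_pos hc]
    rw [inv_mul_le_iff₀ hc, mul_comm]
    exact hφnorm k
  -- product bounds
  have hP0 : ∀ N, 0 ≤ ∏ j ∈ Finset.range N, (1 - D j) :=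
    fun N => Finset.prod_nonneg fun j _ => by linarith [hD1 j]
  have hP1 : ∀ N, ∏ j ∈ Finset.range N, (1 - D j) ≤ 1 :=
    fun N => Finset.prod_le_one (fun j _ => by linarith [hD1 j]) (fun j _ => by
      linarith [(hD0 j).le])
  have hPge : ∀ N, 1 - ε' ≤ ∏ j ∈ Finset.range N, (1 - D j) := by
    intro N
    have hsum : ∑ j ∈ Finset.range N, D j ≤ ε' := by
      have hDj : ∀ j, D j = ε'/4 * (1/2 : ℝ) ^ j := by
        intro j; rw [hD_def]; ring
      calc ∑ j ∈ Finset.range N, D j = ε'/4 * ∑ j ∈ Finset.range N, (1/2 : ℝ) ^ j := by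
            rw [Finset.mul_sum]; exact Finset.sum_congr rfl fun j _ => hDj j
        _ ≤ ε'/4 * 2 := by
            have := sum_geometric_two_le N
            nlinarith
        _ ≤ ε' := by nlinarith
    have := aux_prod_ge N D (fun j => (hD0 j).le) hD1
    linarith
  -- main lower bound by induction
  have main : ∀ N : ℕ, ∀ β : 𝕜, ∀ α : Fin N → 𝕜,
      (∏ j ∈ Finset.range N, (1 - D j)) * (‖β‖ + ∑ j, ‖α j‖) ≤
        ‖β • (((‖x₀‖⁻¹ : ℝ) : 𝕜) • x₀) + ∑ j, α j • (((c⁻¹ : ℝ) : 𝕜) • x (φ j))‖ := by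
    intro N
    induction N with
    | zero =>
      intro β α
      simp only [Finset.range_zero, Finset.prod_empty, Finset.univ_eq_empty,
        Finset.sum_empty, add_zero, one_mul]
      rw [norm_smul, hu, mul_one]
    | succ N ih =>
      intro β α
      obtain ⟨m, hm1, hm2, hm3⟩ := key N
      -- split off the last term
      rw [Fin.sum_univ_castSucc (fun j : Fin (N + 1) => α j • (((c⁻¹ : ℝ) : 𝕜) • x (φ j)))]
      rw [Fin.sum_univ_castSucc (fun j : Fin (N + 1) => ‖α j‖)]
      set y : X := β • (((‖x₀‖⁻¹ : ℝ) : 𝕜) • x₀) +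
        ∑ j : Fin N, α j.castSucc • (((c⁻¹ : ℝ) : 𝕜) • x (φ j.castSucc)) with hy_def
      have hy_mem : y ∈ Wsub m := by
        refine Submodule.add_mem _ (Submodule.smul_mem _ _ (Submodule.smul_mem _ _ hm2)) ?_
        refine Submodule.sum_mem _ fun j _ => ?_
        exact Submodule.smul_mem _ _ (Submodule.smul_mem _ _ (hm3 j (by
          simpa using j.isLt)))
      have hyn : (∏ j ∈ Finset.range N, (1 - D j)) *
          (‖β‖ + ∑ j : Fin N, ‖α j.castSucc‖) ≤ ‖y‖ := by
        rw [hy_def]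
        simpa only [Fin.coe_castSucc] using ih β (fun j => α j.castSucc)
      have hstep := hG3 N m y hy_mem (α (Fin.last N) * ((c⁻¹ : ℝ) : 𝕜))
      have hcoef : ‖α (Fin.last N) * ((c⁻¹ : ℝ) : 𝕜)‖ * c = ‖α (Fin.last N)‖ := by
        rw [norm_mul, RCLike.norm_ofReal, abs_inv, abs_of_pos hc]
        field_simp
      rw [hcoef] at hstep
      have heq : y + (α (Fin.last N) * ((c⁻¹ : ℝ) : 𝕜)) • x (φ N) =
          β • (((‖x₀‖⁻¹ : ℝ) : 𝕜) • x₀) +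
            (∑ j : Fin N, α j.castSucc • (((c⁻¹ : ℝ) : 𝕜) • x (φ j.castSucc)) +
              α (Fin.last N) • (((c⁻¹ : ℝ) : 𝕜) • x (φ (Fin.last N)))) := by
        simp only [hy_def, smul_smul, add_assoc, Fin.val_last]
      rw [← hm1] at hstep
      rw [← heq]
      have hsum_n : 0 ≤ ‖β‖ + ∑ j : Fin N, ‖α j.castSucc‖ := by
        have : (0:ℝ) ≤ ∑ j : Fin N, ‖α j.castSucc‖ :=
          Finset.sum_nonneg fun j _ => norm_nonneg _
        linarith [norm_nonneg β]
      have ha : 0 ≤ ‖α (Fin.last N)‖ := norm_nonneg _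
      have hPsucc : ∏ j ∈ Finset.range (N + 1), (1 - D j) =
          (∏ j ∈ Finset.range N, (1 - D j)) * (1 - D N) := Finset.prod_range_succ _ _
      have hDN0 := (hD0 N).le
      have hDN1 := hD1 N
      have hPN0 := hP0 N
      have hPN1 := hP1 N
      -- combine
      calc (∏ j ∈ Finset.range (N + 1), (1 - D j)) *
            (‖β‖ + (∑ j : Fin N, ‖α j.castSucc‖ + ‖α (Fin.last N)‖))
          ≤ (1 - D N) * (‖y‖ + ‖α (Fin.last N)‖) := by
            rw [hPsucc]
            nlinarith [mul_le_mul_of_nonneg_left hyn (sub_nonneg.2 hDN1),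
              mul_nonneg (mul_nonneg (sub_nonneg.2 hPN1) (sub_nonneg.2 hDN1)) ha]
        _ ≤ ‖y + (α (Fin.last N) * ((c⁻¹ : ℝ) : 𝕜)) • x (φ N)‖ := hstep
  refine ⟨φ, hφmono, fun N β α => ?_⟩
  have hsumn : (0:ℝ) ≤ ∑ j, ‖α j‖ := Finset.sum_nonneg fun j _ => norm_nonneg _
  have hT : (0:ℝ) ≤ ‖β‖ + ∑ j, ‖α j‖ := by linarith [norm_nonneg β]
  constructor
  · have h1 := main N β α
    have h2 := hPge N
    nlinarith
  · -- upper bound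
    calc ‖β • (((‖x₀‖⁻¹ : ℝ) : 𝕜) • x₀) + ∑ j, α j • (((c⁻¹ : ℝ) : 𝕜) • x (φ j))‖
        ≤ ‖β • (((‖x₀‖⁻¹ : ℝ) : 𝕜) • x₀)‖ + ‖∑ j, α j • (((c⁻¹ : ℝ) : 𝕜) • x (φ j))‖ :=
          norm_add_le _ _
      _ ≤ ‖β‖ + ∑ j, ‖α j‖ * (1 + ε') := by
          rw [norm_smul, hu, mul_one]
          gcongr
          refine le_trans (norm_sum_le _ _) (Finset.sum_le_sum fun j _ => ?_)
          rw [norm_smul]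
          exact mul_le_mul_of_nonneg_left (hv j) (norm_nonneg _)
      _ ≤ (1 + ε) * (‖β‖ + ∑ j, ‖α j‖) := by
          rw [← Finset.sum_mul]
          nlinarith [norm_nonneg β]
end

section
/- A Banach space X has the Schur property if and only if it has property (m₁), i.e., lim sup ‖x_n + x‖ = ‖x‖ + lim sup ‖x_n‖ for every x ∈ X and every weakly null sequence (x_n) in X. -/
open Filter

/-- Greedy construction: choose indices `idx` so that adding `w (idx k)` to the running sum
increases the norm by at least `c k`, while keeping `idx k ≥ N k` and `idx` strictly monotone. -/
private lemma greedy_aux {X : Type*} [NormedAddCommGroup X]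
    (w : ℕ → X) (N : ℕ → ℕ) (c : ℕ → ℝ)
    (hex : ∀ (k b : ℕ) (y : X), ∃ n, b ≤ n ∧ N k ≤ n ∧ ‖y‖ + c k < ‖w n + y‖) :
    ∃ idx : ℕ → ℕ, StrictMono idx ∧ (∀ k, N k ≤ idx k) ∧
      ∀ k, ‖∑ i ∈ Finset.range k, w (idx i)‖ + c k <
        ‖∑ i ∈ Finset.range (k + 1), w (idx i)‖ := by
  choose F hF1 hF2 hF3 using hex
  let g : ℕ → ℕ × X := fun k => Nat.rec ((0 : ℕ), (0 : X))
    (fun k p => (F k p.1 p.2 + 1, p.2 + w (F k p.1 p.2))) k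
  let idx : ℕ → ℕ := fun k => F k (g k).1 (g k).2
  have hg : ∀ k, g (k + 1) = (idx k + 1, (g k).2 + w (idx k)) := fun k => rfl
  have hsum : ∀ k, (g k).2 = ∑ i ∈ Finset.range k, w (idx i) := by
    intro k
    induction k with
    | zero => simp [g]
    | succ k ih => rw [hg, Finset.sum_range_succ, ← ih]
  have hmono : StrictMono idx := by
    apply strictMono_nat_of_lt_succ
    intro k
    have h1 : (g (k + 1)).1 ≤ idx (k + 1) := hF1 _ _ _
    rw [hg] at h1
    simpa using lt_of_lt_of_le (Nat.lt_succ_self _) h1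
  refine ⟨idx, hmono, fun k => hF2 _ _ _, fun k => ?_⟩
  have h3 : ‖(g k).2‖ + c k < ‖w (idx k) + (g k).2‖ := hF3 k (g k).1 (g k).2
  rw [hsum k] at h3
  rw [Finset.sum_range_succ]
  calc ‖∑ i ∈ Finset.range k, w (idx i)‖ + c k
      < ‖w (idx k) + ∑ i ∈ Finset.range k, w (idx i)‖ := h3
    _ = ‖∑ i ∈ Finset.range k, w (idx i) + w (idx k)‖ := by rw [add_comm]

/-- A Banach space has the Schur property (weakly convergent sequences are norm convergent)
if and only if it has property `(m₁)`: `limsup ‖x_n + y‖ = ‖y‖ + limsup ‖x_n‖` for every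
`y ∈ X` and every weakly null sequence `(x_n)`. -/
theorem stmt8 {X : Type*} [NormedAddCommGroup X] [NormedSpace ℝ X] [CompleteSpace X] :
    (∀ (x : ℕ → X) (x₀ : X),
        (∀ f : X →L[ℝ] ℝ, Filter.Tendsto (fun n => f (x n)) Filter.atTop (nhds (f x₀))) →
        Filter.Tendsto x Filter.atTop (nhds x₀)) ↔
    (∀ (x : ℕ → X) (y : X),
        (∀ f : X →L[ℝ] ℝ, Filter.Tendsto (fun n => f (x n)) Filter.atTop (nhds 0)) →
        Filter.limsup (fun n => ‖x n + y‖) Filter.atTop =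
          ‖y‖ + Filter.limsup (fun n => ‖x n‖) Filter.atTop) := by
  constructor
  · -- Schur implies (m₁)
    intro hs x y hx
    have h0 : Tendsto x atTop (nhds (0 : X)) := hs x 0 (fun f => by simpa using hx f)
    have h1 : Tendsto (fun n => ‖x n + y‖) atTop (nhds ‖y‖) := by
      have := (h0.add_const y).norm
      simpa using this
    have h2 : Tendsto (fun n => ‖x n‖) atTop (nhds (0 : ℝ)) := by
      simpa using h0.norm
    rw [h1.limsup_eq, h2.limsup_eq, add_zero]
  · -- (m₁) implies Schur
    intro hm x x₀ hx
    set z : ℕ → X := fun n => x n - x₀ with hzdef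
    have hzweak : ∀ f : X →L[ℝ] ℝ, Tendsto (fun n => f (z n)) atTop (nhds (0 : ℝ)) := by
      intro f
      have := (hx f).sub_const (f x₀)
      simpa [hzdef, map_sub] using this
    rw [tendsto_iff_norm_sub_tendsto_zero]
    by_contra hnot
    obtain ⟨ε, hε, hfreq⟩ : ∃ ε > (0 : ℝ), ∃ᶠ n in atTop, ε ≤ ‖z n‖ := by
      rw [Metric.tendsto_atTop] at hnot
      push_neg at hnot
      obtain ⟨ε, hε, hN⟩ := hnot
      refine ⟨ε, hε, frequently_atTop.mpr fun b => ?_⟩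
      obtain ⟨n, hn1, hn2⟩ := hN b
      refine ⟨n, hn1, ?_⟩
      rw [Real.dist_eq, sub_zero, abs_of_nonneg (norm_nonneg _)] at hn2
      exact hn2
    by_cases hbdd : IsBoundedUnder (· ≤ ·) atTop (fun n => ‖z n‖)
    swap
    · -- unbounded case: both limsups degenerate to 0, contradiction
      obtain ⟨n₀, hn₀⟩ := hfreq.exists
      have h1 := hm z (z n₀) hzweak
      have he : {a : ℝ | ∀ᶠ n in atTop, ‖z n‖ ≤ a} = ∅ := by
        ext a
        simp only [Set.mem_setOf_eq, Set.mem_empty_iff_false, iff_false]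
        intro h
        exact hbdd ⟨a, by rwa [eventually_map]⟩
      have he2 : {a : ℝ | ∀ᶠ n in atTop, ‖z n + z n₀‖ ≤ a} = ∅ := by
        ext a
        simp only [Set.mem_setOf_eq, Set.mem_empty_iff_false, iff_false]
        intro h
        refine hbdd ⟨a + ‖z n₀‖, ?_⟩
        rw [eventually_map]
        filter_upwards [h] with n hn
        calc ‖z n‖ = ‖z n + z n₀ - z n₀‖ := by rw [add_sub_cancel_right]
          _ ≤ ‖z n + z n₀‖ + ‖z n₀‖ := norm_sub_le _ _
          _ ≤ a + ‖z n₀‖ := by linarith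
      rw [limsup_eq, limsup_eq, he, he2, Real.sInf_empty] at h1
      have : ‖z n₀‖ = 0 := by linarith
      linarith
    -- bounded case
    set L := limsup (fun n => ‖z n‖) atTop with hLdef
    have hLe : ε ≤ L := le_limsup_of_frequently_le hfreq hbdd
    have hLpos : 0 < L := lt_of_lt_of_le hε hLe
    -- extract a subsequence along which the norms converge to L
    have hfr : ∀ k : ℕ, ∃ᶠ n in atTop, |‖z n‖ - L| < 1 / (k + 1) := by
      intro k
      have hk : (0 : ℝ) < 1 / (k + 1) := by positivity
      have h1 : ∃ᶠ n in atTop, L - 1 / (k + 1) < ‖z n‖ :=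
        frequently_lt_of_lt_limsup
          (isCoboundedUnder_le_of_le _ fun n => norm_nonneg _) (by linarith)
      have h2 : ∀ᶠ n in atTop, ‖z n‖ < L + 1 / (k + 1) :=
        eventually_lt_of_limsup_lt (by linarith) hbdd
      refine (h1.and_eventually h2).mono ?_
      rintro n ⟨ha, hb⟩
      rw [abs_lt]
      constructor <;> linarith
    obtain ⟨φ, hφmono, hφ2⟩ := extraction_forall_of_frequently hfr
    set w : ℕ → X := fun k => z (φ k) with hwdef
    have hwL : Tendsto (fun k => ‖w k‖) atTop (nhds L) := by
      have h1 : ∀ k : ℕ, dist (‖w k‖) L ≤ 1 / (k + 1) := fun k => by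
        rw [Real.dist_eq]; exact (hφ2 k).le
      rw [tendsto_iff_dist_tendsto_zero]
      exact squeeze_zero (fun k => dist_nonneg) h1 tendsto_one_div_add_atTop_nhds_zero_nat
    have hwweak : ∀ f : X →L[ℝ] ℝ, Tendsto (fun k => f (w k)) atTop (nhds (0 : ℝ)) :=
      fun f => (hzweak f).comp hφmono.tendsto_atTop
    have key : ∀ y : X, limsup (fun n => ‖w n + y‖) atTop = ‖y‖ + L := by
      intro y
      rw [hm w y hwweak, hwL.limsup_eq]
    set δ : ℝ := L / 8 with hδdef
    have hδ : 0 < δ := by positivity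
    -- tail control of the norms
    have hN : ∀ k : ℕ, ∃ Nk : ℕ, ∀ n ≥ Nk, ‖w n‖ ≤ L + δ / 2 ^ (k + 1) := by
      intro k
      have hlt : L < L + δ / 2 ^ (k + 1) := by
        have : (0 : ℝ) < δ / 2 ^ (k + 1) := by positivity
        linarith
      have := (hwL.eventually_lt_const hlt)
      obtain ⟨Nk, hNk⟩ := eventually_atTop.mp this
      exact ⟨Nk, fun n hn => le_of_lt (hNk n hn)⟩
    choose N hNs using hN
    -- existence statement for the greedy construction
    have hex : ∀ (k b : ℕ) (y : X),
        ∃ n, b ≤ n ∧ N k ≤ n ∧ ‖y‖ + (L - δ / 2 ^ (k + 1)) < ‖w n + y‖ := by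
      intro k b y
      have hpos : (0 : ℝ) < δ / 2 ^ (k + 1) := by positivity
      have h1 : ∃ᶠ n in atTop, ‖y‖ + (L - δ / 2 ^ (k + 1)) < ‖w n + y‖ := by
        apply frequently_lt_of_lt_limsup
          (isCoboundedUnder_le_of_le _ fun n => norm_nonneg _)
        rw [key y]
        linarith
      obtain ⟨n, hn, h⟩ := frequently_atTop.mp h1 (max b (N k))
      exact ⟨n, le_trans (le_max_left _ _) hn, le_trans (le_max_right _ _) hn, h⟩
    obtain ⟨idx, hmono, hidxN, hstep⟩ := greedy_aux w N _ hex
    set u : ℕ → X := fun k => w (idx k) with hudef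
    set s : ℕ → X := fun k => ∑ i ∈ Finset.range k, u i with hsdef
    have hs_succ : ∀ k, s (k + 1) = s k + u k := fun k => Finset.sum_range_succ _ _
    have hstep' : ∀ k, ‖s k‖ + (L - δ / 2 ^ (k + 1)) < ‖s (k + 1)‖ := hstep
    have hu : ∀ k, ‖u k‖ ≤ L + δ / 2 ^ (k + 1) := fun k => hNs k _ (hidxN k)
    have hhalf : ∀ k : ℕ, δ / 2 ^ k - δ / 2 ^ (k + 1) = δ / 2 ^ (k + 1) := by
      intro k
      have h2 : (0 : ℝ) < 2 ^ k := by positivity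
      rw [pow_succ]
      field_simp
      ring
    -- lower bound on the norms of partial sums
    have hslow : ∀ k : ℕ, (k : ℝ) * L - (δ - δ / 2 ^ k) ≤ ‖s k‖ := by
      intro k
      induction k with
      | zero => simp [hsdef]
      | succ k ih =>
        have h1 := hstep' k
        have h2 := hhalf k
        push_cast
        push_cast at ih
        linarith
    have hsK : ∀ K : ℕ, (K : ℝ) * L - δ ≤ ‖s K‖ := by
      intro K
      have h1 := hslow K
      have h2 : (0 : ℝ) ≤ δ / 2 ^ K := by positivity
      linarith
    -- upper bound on differences of partial sums
    have hdiff : ∀ m j : ℕ, ‖s (m + j) - s m‖ ≤ (j : ℝ) * L + (δ / 2 ^ m - δ / 2 ^ (m + j)) := by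
      intro m j
      induction j with
      | zero => simp
      | succ j ih =>
        have h1 : s (m + (j + 1)) = s (m + j) + u (m + j) := by
          rw [show m + (j + 1) = (m + j) + 1 from rfl, hs_succ]
        have h2 : ‖s (m + (j + 1)) - s m‖ ≤ ‖s (m + j) - s m‖ + ‖u (m + j)‖ := by
          rw [h1]
          calc ‖s (m + j) + u (m + j) - s m‖ = ‖(s (m + j) - s m) + u (m + j)‖ := by abel_nf
            _ ≤ ‖s (m + j) - s m‖ + ‖u (m + j)‖ := norm_add_le _ _
        have h3 := hu (m + j)
        have h4 := hhalf (m + j)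
        have h5 : m + (j + 1) = (m + j) + 1 := rfl
        rw [h5] at h2
        rw [h5]
        push_cast
        push_cast at ih
        linarith
    have hdiff' : ∀ m j : ℕ, ‖s (m + j) - s m‖ ≤ (j : ℝ) * L + δ := by
      intro m j
      have h1 := hdiff m j
      have h2 : δ / 2 ^ m ≤ δ :=
        div_le_self hδ.le (one_le_pow₀ (by norm_num))
      have h3 : (0 : ℝ) ≤ δ / 2 ^ (m + j) := by positivity
      linarith
    have hsupper : ∀ i : ℕ, ‖s i‖ ≤ (i : ℝ) * L + δ := by
      intro i
      have := hdiff' 0 i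
      simpa [hsdef] using this
    -- norming functionals of the partial sums
    have hfunc : ∀ K : ℕ, 1 ≤ K → ∃ g : X →L[ℝ] ℝ, ‖g‖ = 1 ∧ ∀ i < K, L / 2 ≤ g (u i) := by
      intro K hK
      have hKR : (1 : ℝ) ≤ (K : ℝ) := by exact_mod_cast hK
      have hKs : s K ≠ 0 := by
        intro h
        have h1 := hsK K
        rw [h, norm_zero] at h1
        nlinarith
      obtain ⟨g, hg1, hg2⟩ := exists_dual_vector ℝ (s K) (norm_ne_zero_iff.mpr hKs)
      refine ⟨g, hg1, fun i hi => ?_⟩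
      have hb : ∀ v : X, |g v| ≤ ‖v‖ := by
        intro v
        calc |g v| = ‖g v‖ := (Real.norm_eq_abs _).symm
          _ ≤ ‖g‖ * ‖v‖ := g.le_opNorm v
          _ = ‖v‖ := by rw [hg1, one_mul]
      have e1 : u i = s (i + 1) - s i := by rw [hs_succ]; abel
      have b1 : g (s K) = ‖s K‖ := by exact_mod_cast hg2
      have b2 : g (s K - s (i + 1)) ≤ ‖s K - s (i + 1)‖ :=
        le_trans (le_abs_self _) (hb _)
      have b3 : g (s i) ≤ (i : ℝ) * L + δ := le_trans (le_trans (le_abs_self _) (hb _)) (hsupper i)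
      have hi1 : i + 1 ≤ K := hi
      have b4 : ‖s K - s (i + 1)‖ ≤ ((K : ℝ) - (i : ℝ) - 1) * L + δ := by
        have hj : (i + 1) + (K - (i + 1)) = K := Nat.add_sub_cancel' hi1
        have := hdiff' (i + 1) (K - (i + 1))
        rw [hj] at this
        have hc : ((K - (i + 1) : ℕ) : ℝ) = (K : ℝ) - (i : ℝ) - 1 := by
          rw [Nat.cast_sub hi1]
          push_cast
          ring
        rw [hc] at this
        exact this
      have b5 : ‖s K‖ - ‖s K - s (i + 1)‖ ≤ g (s (i + 1)) := by
        have : g (s (i + 1)) = g (s K) - g (s K - s (i + 1)) := by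
          rw [map_sub]; ring
        rw [this, b1]
        linarith
      have hKlow := hsK K
      rw [e1, map_sub]
      have hexp : ((K : ℝ) - (i : ℝ) - 1) * L = (K : ℝ) * L - (i : ℝ) * L - L := by ring
      have hδL : δ = L / 8 := hδdef
      nlinarith
    -- the closed convex hull of the sequence stays away from 0
    have hhull : ∀ v ∈ convexHull ℝ (Set.range u), L / 2 ≤ ‖v‖ := by
      intro v hv
      rw [convexHull_eq] at hv
      obtain ⟨ι, t, wt, zf, hw0, hw1, hzmem, hcm⟩ := hv
      have hm' : ∀ i ∈ t, ∃ j, u j = zf i := fun i hi => hzmem i hi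
      choose! mfun hmj using hm'
      obtain ⟨g, hg1, hg2⟩ := hfunc (t.sup mfun + 1) (Nat.le_add_left 1 _)
      have hgv : g v = ∑ i ∈ t, wt i * g (zf i) := by
        rw [← hcm, Finset.centerMass_eq_of_sum_1 _ _ hw1, map_sum]
        simp [smul_eq_mul]
      have h1 : L / 2 ≤ g v := by
        rw [hgv]
        calc L / 2 = ∑ i ∈ t, wt i * (L / 2) := by rw [← Finset.sum_mul, hw1, one_mul]
          _ ≤ ∑ i ∈ t, wt i * g (zf i) := by
            apply Finset.sum_le_sum
            intro i hi
            apply mul_le_mul_of_nonneg_left _ (hw0 i hi)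
            rw [← hmj i hi]
            exact hg2 (mfun i) (Nat.lt_succ_of_le (Finset.le_sup hi))
      calc L / 2 ≤ g v := h1
        _ ≤ |g v| := le_abs_self _
        _ = ‖g v‖ := (Real.norm_eq_abs _).symm
        _ ≤ ‖g‖ * ‖v‖ := g.le_opNorm v
        _ = ‖v‖ := by rw [hg1, one_mul]
    have hclosed : ∀ v ∈ closure (convexHull ℝ (Set.range u)), L / 2 ≤ ‖v‖ := by
      intro v hv
      have hsub : convexHull ℝ (Set.range u) ⊆ {v : X | L / 2 ≤ ‖v‖} := hhull
      have : closure (convexHull ℝ (Set.range u)) ⊆ {v : X | L / 2 ≤ ‖v‖} :=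
        closure_minimal hsub (isClosed_le continuous_const continuous_norm)
      exact this hv
    have h0mem : (0 : X) ∉ closure (convexHull ℝ (Set.range u)) := by
      intro h
      have := hclosed 0 h
      rw [norm_zero] at this
      linarith
    obtain ⟨f, cr, hf0, hfb⟩ := geometric_hahn_banach_point_closed
      ((convex_convexHull ℝ (Set.range u)).closure) isClosed_closure h0mem
    have hcr : 0 < cr := by
      have := hf0
      rw [map_zero] at this
      exact this
    have hlow : ∀ i, cr < f (u i) := fun i =>
      hfb _ (subset_closure (subset_convexHull ℝ _ (Set.mem_range_self i)))
    have htend : Tendsto (fun i => f (u i)) atTop (nhds (0 : ℝ)) :=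
      (hwweak f).comp hmono.tendsto_atTop
    obtain ⟨i, hi⟩ := (htend.eventually_lt_const hcr).exists
    exact absurd (hlow i) (not_lt.mpr hi.le)
end

section
/- Let X be a Banach space admitting a linear topology τ on X such that (i) every bounded sequence in X has a τ-convergent subsequence, and (ii) whenever (x_n) is a bounded sequence τ-converging to 0, then for every y ∈ X, lim sup ‖x_n + y‖ = ‖y‖ + lim sup ‖x_n‖. Then X has the 1-Schur property: ca(x_n) ≤ δ(x_n) for every bounded sequence, where ca(x_n) = inf_n diam{x_k : k ≥ n} and δ(x_n) = sup{ca(⟨x*, x_n⟩) : x* ∈ B_{X*}}. -/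
open Filter Metric

/-- The oscillation `ca(x_n) = inf_n diam {x_k : k ≥ n}` of a sequence. -/
noncomputable def ca {X : Type*} [PseudoMetricSpace X] (x : ℕ → X) : ℝ :=
  ⨅ n : ℕ, Metric.diam (x '' Set.Ici n)

/-- `δ(x_n) = sup {ca(⟨x*, x_n⟩) : x* ∈ B_{X*}}`, the measure of weak non-Cauchyness. -/
noncomputable def delta {X : Type*} [NormedAddCommGroup X] [NormedSpace ℝ X] (x : ℕ → X) : ℝ :=
  sSup {r : ℝ | ∃ f : X →L[ℝ] ℝ, ‖f‖ ≤ 1 ∧ r = ca fun n => f (x n)}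

lemma ca_le_diam_tail {X : Type*} [PseudoMetricSpace X] (x : ℕ → X) (n : ℕ) :
    ca x ≤ Metric.diam (x '' Set.Ici n) :=
  ciInf_le ⟨0, by rintro r ⟨m, rfl⟩; exact Metric.diam_nonneg⟩ n

lemma le_ca {X : Type*} [PseudoMetricSpace X] {x : ℕ → X} {r : ℝ}
    (h : ∀ n, r ≤ Metric.diam (x '' Set.Ici n)) : r ≤ ca x :=
  le_ciInf h

lemma le_delta_of_mem {X : Type*} [NormedAddCommGroup X] [NormedSpace ℝ X] {x : ℕ → X} {M : ℝ}
    (hM : ∀ n, ‖x n‖ ≤ M) (f : X →L[ℝ] ℝ) (hf : ‖f‖ ≤ 1) :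
    ca (fun n => f (x n)) ≤ delta x := by
  have hM0 : 0 ≤ M := (norm_nonneg _).trans (hM 0)
  apply le_csSup
  · refine ⟨2 * M, ?_⟩
    rintro r ⟨g, hg, rfl⟩
    have habs : ∀ i, |g (x i)| ≤ M := by
      intro i
      have h1 := g.le_opNorm (x i)
      have h2 : ‖g‖ * ‖x i‖ ≤ 1 * M :=
        mul_le_mul hg (hM i) (norm_nonneg _) zero_le_one
      calc |g (x i)| = ‖g (x i)‖ := (Real.norm_eq_abs _).symm
        _ ≤ ‖g‖ * ‖x i‖ := h1
        _ ≤ M := by linarith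
    refine le_trans (ca_le_diam_tail _ 0) (Metric.diam_le_of_forall_dist_le (by linarith) ?_)
    rintro u ⟨i, -, rfl⟩ v ⟨j, -, rfl⟩
    rw [Real.dist_eq]
    have h1 := habs i
    have h2 := habs j
    have := abs_sub (g (x i)) (g (x j))
    linarith
  · exact ⟨f, hf, rfl⟩

/-- If a Banach space `X` admits a linear topology `τ` such that every bounded sequence has a
`τ`-convergent subsequence, and `limsup ‖x_n + y‖ = ‖y‖ + limsup ‖x_n‖` whenever `(x_n)` is
bounded and `τ`-null, then `X` has the `1`-Schur property: `ca(x_n) ≤ δ(x_n)` for every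
bounded sequence. -/
theorem stmt9 {X : Type*} [NormedAddCommGroup X] [NormedSpace ℝ X] [CompleteSpace X]
    (τ : TopologicalSpace X)
    (hadd : @ContinuousAdd X τ _)
    (hsmul : @ContinuousSMul ℝ X _ _ τ)
    (h1 : ∀ x : ℕ → X, (∃ M : ℝ, ∀ n, ‖x n‖ ≤ M) →
      ∃ (φ : ℕ → ℕ) (l : X), StrictMono φ ∧
        Filter.Tendsto (x ∘ φ) Filter.atTop (@nhds X τ l))
    (h2 : ∀ x : ℕ → X, (∃ M : ℝ, ∀ n, ‖x n‖ ≤ M) →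
      Filter.Tendsto x Filter.atTop (@nhds X τ 0) →
      ∀ y : X, Filter.limsup (fun n => ‖x n + y‖) Filter.atTop =
        ‖y‖ + Filter.limsup (fun n => ‖x n‖) Filter.atTop)
    (x : ℕ → X) (hx : ∃ M : ℝ, ∀ n, ‖x n‖ ≤ M) :
    ca x ≤ delta x := by
  obtain ⟨M, hM⟩ := hx
  have hM0 : 0 ≤ M := (norm_nonneg _).trans (hM 0)
  -- it suffices to prove `ca x ≤ delta x + ε` for all positive `ε`
  by_contra hcon
  push_neg at hcon
  set ε : ℝ := (ca x - delta x) / 4 with hεdef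
  have hε : 0 < ε := by
    have : 0 < ca x - delta x := by linarith
    positivity
  -- Step 1: choose pairs in the tails realizing the oscillation up to ε
  have hpair : ∀ n, ∃ p q, n ≤ p ∧ n ≤ q ∧ ca x - ε ≤ dist (x p) (x q) := by
    intro n
    by_cases hcase : ca x - ε ≤ 0
    · exact ⟨n, n, le_rfl, le_rfl, by rw [dist_self]; exact hcase⟩
    · push_neg at hcase
      by_contra hno
      push_neg at hno
      have hd : Metric.diam (x '' Set.Ici n) ≤ ca x - ε := by
        refine Metric.diam_le_of_forall_dist_le hcase.le ?_
        rintro u ⟨p, hp, rfl⟩ v ⟨q, hq, rfl⟩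
        exact (hno p q hp hq).le
      have := ca_le_diam_tail x n
      linarith
  choose a b ha hb hab using hpair
  set z : ℕ → X := fun n => x (a n) - x (b n) with hzdef
  have hznorm : ∀ n, ca x - ε ≤ ‖z n‖ := by
    intro n
    have := hab n
    rwa [dist_eq_norm] at this
  have hzbd : ∀ n, ‖z n‖ ≤ 2 * M := by
    intro n
    calc ‖z n‖ ≤ ‖x (a n)‖ + ‖x (b n)‖ := norm_sub_le _ _
      _ ≤ 2 * M := by linarith [hM (a n), hM (b n)]
  -- Step 2: a τ-convergent subsequence of `z`
  obtain ⟨ψ, l, hψ, hconv⟩ := h1 z ⟨2 * M, hzbd⟩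
  -- Step 3: the τ-null sequence `w`
  set w : ℕ → X := fun n => z (ψ n) - l with hwdef
  have hwle : ∀ n, ‖w n‖ ≤ 2 * M + ‖l‖ := by
    intro n
    calc ‖w n‖ ≤ ‖z (ψ n)‖ + ‖l‖ := norm_sub_le _ _
      _ ≤ 2 * M + ‖l‖ := by linarith [hzbd (ψ n)]
  have hwnull : Filter.Tendsto w Filter.atTop (@nhds X τ 0) := by
    have hc : Filter.Tendsto (fun _ : ℕ => -l) Filter.atTop (@nhds X τ (-l)) :=
      @tendsto_const_nhds X τ ℕ (-l) Filter.atTop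
    have h' := @Filter.Tendsto.add X τ _ hadd ℕ (fun n => z (ψ n)) (fun _ => -l)
      Filter.atTop l (-l) hconv hc
    rw [add_neg_cancel] at h'
    have heq : (fun n => z (ψ n) + -l) = w := by
      funext n; simp [hwdef, sub_eq_add_neg]
    rwa [heq] at h'
  -- limsup facts
  set L : ℝ := Filter.limsup (fun n => ‖w n‖) Filter.atTop with hLdef
  have hsplit : ∀ y : X, Filter.limsup (fun n => ‖w n + y‖) Filter.atTop = ‖y‖ + L :=
    h2 w ⟨2 * M + ‖l‖, hwle⟩ hwnull
  clear hconv hwnull h1 h2 hadd hsmul τ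
  have hbddy : ∀ y : X, Filter.IsBoundedUnder (· ≤ ·) Filter.atTop (fun n => ‖w n + y‖) := by
    intro y
    exact Filter.isBoundedUnder_of ⟨2 * M + ‖l‖ + ‖y‖, fun n =>
      (norm_add_le _ _).trans (by linarith [hwle n])⟩
  have hbddw : Filter.IsBoundedUnder (· ≤ ·) Filter.atTop (fun n => ‖w n‖) :=
    Filter.isBoundedUnder_of ⟨2 * M + ‖l‖, hwle⟩
  have hcob : ∀ y : X, Filter.IsCoboundedUnder (· ≤ ·) Filter.atTop (fun n => ‖w n + y‖) := by
    intro y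
    exact Filter.IsBoundedUnder.isCoboundedUnder_le
      (Filter.isBoundedUnder_of ⟨0, fun n => norm_nonneg _⟩)
  have hL0 : 0 ≤ L :=
    le_limsup_of_frequently_le (Filter.Frequently.of_forall fun n => norm_nonneg _) hbddw
  have hwl : ∀ n, w n + l = z (ψ n) := by
    intro n; simp [hwdef]
  have hcl : ca x - ε ≤ ‖l‖ + L := by
    have hfreq : ∃ᶠ n in Filter.atTop, ca x - ε ≤ ‖w n + l‖ :=
      Filter.Frequently.of_forall fun n => by rw [hwl n]; exact hznorm (ψ n)
    have := le_limsup_of_frequently_le hfreq (hbddy l)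
    rwa [hsplit l] at this
  -- Step 5: the greedy step
  have step : ∀ (p : ℕ) (S : X) (j : ℕ), ∃ q, p < q ∧
      ‖S‖ + L - ε / 2 ^ (j + 1) ≤ ‖w q + S‖ ∧ ‖w q‖ ≤ L + ε / 2 ^ (j + 1) := by
    intro p S j
    have hd : 0 < ε / 2 ^ (j + 1) := by positivity
    have hfreq : ∃ᶠ q in Filter.atTop, ‖S‖ + L - ε / 2 ^ (j + 1) < ‖w q + S‖ :=
      frequently_lt_of_lt_limsup (hcob S) (by rw [hsplit S]; linarith)
    have hev : ∀ᶠ q in Filter.atTop, ‖w q‖ < L + ε / 2 ^ (j + 1) :=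
      eventually_lt_of_limsup_lt (by linarith) hbddw
    have hcomb := (hfreq.and_eventually hev).and_eventually (Filter.eventually_gt_atTop p)
    obtain ⟨q, ⟨hq1, hq2⟩, hq3⟩ := hcomb.exists
    exact ⟨q, hq3, hq1.le, hq2.le⟩
  choose F hF1 hF2 hF3 using step
  -- Step 6: the recursive construction
  obtain ⟨G, hG0, hGs⟩ : ∃ G : ℕ → ℕ × X, G 0 = (0, l) ∧
      ∀ j, G (j + 1) = (F (G j).1 (G j).2 j, (G j).2 + w (F (G j).1 (G j).2 j)) :=
    ⟨fun j => Nat.rec (0, l) (fun i ih => (F ih.1 ih.2 i, ih.2 + w (F ih.1 ih.2 i))) j,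
      rfl, fun j => rfl⟩
  set idx : ℕ → ℕ := fun j => (G (j + 1)).1 with hidxdef
  have hidx_eq : ∀ j, idx j = F (G j).1 (G j).2 j := by
    intro j; simp only [hidxdef]; rw [hGs j]
  have hSs : ∀ j, (G (j + 1)).2 = (G j).2 + w (idx j) := by
    intro j; rw [hidx_eq j, hGs j]
  have hidx_gt : ∀ j, (G j).1 < idx j := by
    intro j; rw [hidx_eq j]; exact hF1 _ _ _
  have hidx_ge : ∀ j, j ≤ (G j).1 := by
    intro j
    induction j with
    | zero => simp
    | succ j ih =>
      have h := hidx_gt j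
      have : idx j = (G (j + 1)).1 := rfl
      omega
  have hidx_ge' : ∀ j, j ≤ idx j := fun j => le_trans (hidx_ge j) (hidx_gt j).le
  have hwb : ∀ j, ‖w (idx j)‖ ≤ L + ε / 2 ^ (j + 1) := by
    intro j; rw [hidx_eq j]; exact hF3 _ _ _
  have hsum : ∀ m, (G m).2 = l + ∑ i ∈ Finset.range m, w (idx i) := by
    intro m
    induction m with
    | zero => simp [hG0]
    | succ m ih =>
      rw [hSs m, ih, Finset.sum_range_succ, add_assoc]
  have hSnorm : ∀ m, ‖l‖ + m * L - ε + ε / 2 ^ m ≤ ‖(G m).2‖ := by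
    intro m
    induction m with
    | zero => simp [hG0]
    | succ m ih =>
      have h1 : ‖(G m).2‖ + L - ε / 2 ^ (m + 1) ≤ ‖w (idx m) + (G m).2‖ := by
        rw [hidx_eq m]; exact hF2 _ _ _
      have h2 : ‖(G (m + 1)).2‖ = ‖w (idx m) + (G m).2‖ := by
        rw [hSs m, add_comm]
      have h3 : (ε : ℝ) / 2 ^ m = 2 * (ε / 2 ^ (m + 1)) := by
        rw [pow_succ]; ring
      push_cast
      rw [h2]
      push_cast at ih
      linarith
  have hSnorm' : ∀ m, ‖l‖ + m * L - ε ≤ ‖(G m).2‖ := by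
    intro m
    have h := hSnorm m
    have : 0 < ε / 2 ^ m := by positivity
    linarith
  -- Step 7: norming functionals
  choose f hf1 hf2 using fun m => exists_dual_vector'' ℝ ((G m).2)
  have happ : ∀ m (v : X), f m v ≤ ‖v‖ := by
    intro m v
    have h1 := (f m).le_opNorm v
    have h2 : ‖f m‖ * ‖v‖ ≤ 1 * ‖v‖ := mul_le_mul_of_nonneg_right (hf1 m) (norm_nonneg v)
    have h3 : f m v ≤ ‖(f m) v‖ := by
      rw [Real.norm_eq_abs]; exact le_abs_self _
    linarith
  have hgeo : ∀ m, ∑ i ∈ Finset.range m, ε / 2 ^ (i + 1) ≤ ε := by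
    intro m
    have h1 : ∀ i ∈ Finset.range m, ε / 2 ^ (i + 1) = ε / 2 * (1 / 2 : ℝ) ^ i := by
      intro i _
      rw [one_div, inv_pow, pow_succ]
      ring
    rw [Finset.sum_congr rfl h1, ← Finset.mul_sum]
    have h2 : ∑ i ∈ Finset.range m, ((1 : ℝ) / 2) ^ i ≤ 2 := by
      have := sum_geometric_two_le m
      simpa [one_div, inv_pow] using this
    calc ε / 2 * ∑ i ∈ Finset.range m, ((1 : ℝ) / 2) ^ i ≤ ε / 2 * 2 :=
      mul_le_mul_of_nonneg_left h2 (by positivity)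
      _ = ε := by ring
  have key : ∀ j m, j < m → ca x - 3 * ε ≤ f m (z (ψ (idx j))) := by
    intro j m hjm
    have hz : z (ψ (idx j)) = l + w (idx j) := by
      simp [hwdef]
    have hmem : j ∈ Finset.range m := Finset.mem_range.mpr hjm
    have hfS : f m (l + w (idx j)) + ∑ i ∈ (Finset.range m).erase j, f m (w (idx i)) =
        f m ((G m).2) := by
      rw [hsum m, map_add, map_add, map_sum, add_assoc,
        Finset.add_sum_erase _ (fun i => f m (w (idx i))) hmem]
    -- bound the sum over the erased set
    have hsum_le : ∑ i ∈ (Finset.range m).erase j, f m (w (idx i)) ≤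
        ((m : ℝ) - 1) * L + ε := by
      have hb : ∀ i ∈ (Finset.range m).erase j, f m (w (idx i)) ≤ L + ε / 2 ^ (i + 1) :=
        fun i _ => (happ m _).trans (hwb i)
      have h1 : ∑ i ∈ (Finset.range m).erase j, f m (w (idx i)) ≤
          ∑ i ∈ (Finset.range m).erase j, (L + ε / 2 ^ (i + 1)) :=
        Finset.sum_le_sum hb
      have h2 : ∑ i ∈ (Finset.range m).erase j, (L + ε / 2 ^ (i + 1)) =
          ((Finset.range m).erase j).card * L +
          ∑ i ∈ (Finset.range m).erase j, ε / 2 ^ (i + 1) := by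
        rw [Finset.sum_add_distrib, Finset.sum_const, nsmul_eq_mul]
      have hcard : ((Finset.range m).erase j).card = m - 1 := by
        rw [Finset.card_erase_of_mem hmem, Finset.card_range]
      have h3 : ∑ i ∈ (Finset.range m).erase j, ε / 2 ^ (i + 1) ≤ ε := by
        refine le_trans (Finset.sum_le_sum_of_subset_of_nonneg (Finset.erase_subset _ _)
          (fun i _ _ => by positivity)) (hgeo m)
      have hcast : (((Finset.range m).erase j).card : ℝ) = (m : ℝ) - 1 := by
        rw [hcard]
        have : (1 : ℕ) ≤ m := by omega
        push_cast [Nat.cast_sub this]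
        ring
      calc ∑ i ∈ (Finset.range m).erase j, f m (w (idx i)) ≤
          ((Finset.range m).erase j).card * L +
            ∑ i ∈ (Finset.range m).erase j, ε / 2 ^ (i + 1) := by rw [← h2]; exact h1
        _ ≤ ((m : ℝ) - 1) * L + ε := by rw [hcast]; linarith
    have hfG : f m ((G m).2) = ‖(G m).2‖ := by simpa using hf2 m
    have hSm := hSnorm' m
    have : ‖l‖ + L - 2 * ε ≤ f m (l + w (idx j)) := by
      linarith [hfS, hSm, hsum_le, hfG]
    rw [hz]
    linarith [hcl]
  -- Step 8: weak* cluster point of the norming functionals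
  set K : Set (WeakDual ℝ X) :=
    WeakDual.toStrongDual ⁻¹' Metric.closedBall (0 : StrongDual ℝ X) 1 with hKdef
  have hK : IsCompact K := WeakDual.isCompact_closedBall (𝕜 := ℝ) 0 1
  set T : ℕ → WeakDual ℝ X := fun m => StrongDual.toWeakDual (f m) with hTdef
  have hTK : ∀ m, T m ∈ K := by
    intro m
    simp only [hKdef, Set.mem_preimage, Metric.mem_closedBall, dist_zero_right]
    exact hf1 m
  have hle : Filter.map T Filter.atTop ≤ Filter.principal K :=
    Filter.le_principal_iff.mpr (Filter.mem_map.mpr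
      (Filter.Eventually.of_forall hTK))
  obtain ⟨g, hgK, hgc⟩ := hK.exists_clusterPt hle
  have hgj : ∀ j, ca x - 3 * ε ≤ g (z (ψ (idx j))) := by
    intro j
    set C : Set (WeakDual ℝ X) := {h : WeakDual ℝ X | ca x - 3 * ε ≤ h (z (ψ (idx j)))}
      with hCdef
    have hclosed : IsClosed C :=
      isClosed_le continuous_const (WeakDual.eval_continuous _)
    have hev : ∀ᶠ m in Filter.atTop, T m ∈ C := by
      refine Filter.eventually_atTop.mpr ⟨j + 1, fun m hm => ?_⟩
      exact key j m (by omega)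
    have hcp : ClusterPt g (Filter.principal C) :=
      hgc.mono (Filter.le_principal_iff.mpr (Filter.mem_map.mpr hev))
    have : g ∈ closure C := mem_closure_iff_clusterPt.mpr hcp
    rwa [hclosed.closure_eq] at this
  set fcl : X →L[ℝ] ℝ := WeakDual.toStrongDual g with hfinf
  have hfcl : ‖fcl‖ ≤ 1 := by
    have := hgK
    simp only [hKdef, Set.mem_preimage, Metric.mem_closedBall, dist_zero_right] at this
    exact this
  -- Step 9: the oscillation of `fcl ∘ x` is large
  have hca : ca x - 3 * ε ≤ ca (fun n => fcl (x n)) := by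
    refine le_ca fun N => ?_
    have hkge : N ≤ ψ (idx N) := by
      have h1 : N ≤ idx N := by
        have := hidx_ge (N + 1)
        have h2 : idx N = (G (N + 1)).1 := rfl
        omega
      exact h1.trans hψ.le_apply
    set k : ℕ := ψ (idx N) with hkdef
    have hmem1 : fcl (x (a k)) ∈ (fun n => fcl (x n)) '' Set.Ici N :=
      ⟨a k, (hkge.trans (ha k)), rfl⟩
    have hmem2 : fcl (x (b k)) ∈ (fun n => fcl (x n)) '' Set.Ici N :=
      ⟨b k, (hkge.trans (hb k)), rfl⟩
    have hdist : ca x - 3 * ε ≤ dist (fcl (x (a k))) (fcl (x (b k))) := by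
      have h1 := hgj N
      have h2 : g (z k) = fcl (x (a k)) - fcl (x (b k)) := by
        rw [hzdef]
        exact map_sub fcl _ _
      rw [Real.dist_eq]
      rw [hkdef] at h2 ⊢
      calc ca x - 3 * ε ≤ g (z (ψ (idx N))) := h1
        _ = fcl (x (a (ψ (idx N)))) - fcl (x (b (ψ (idx N)))) := h2
        _ ≤ |fcl (x (a (ψ (idx N)))) - fcl (x (b (ψ (idx N))))| := le_abs_self _
    have hbdd_im : Bornology.IsBounded ((fun n => fcl (x n)) '' Set.Ici N) := by
      refine (Metric.isBounded_closedBall (x := (0 : ℝ)) (r := M)).subset ?_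
      rintro u ⟨i, -, rfl⟩
      rw [Metric.mem_closedBall, dist_zero_right]
      calc ‖fcl (x i)‖ ≤ ‖fcl‖ * ‖x i‖ := fcl.le_opNorm _
        _ ≤ 1 * M := mul_le_mul hfcl (hM i) (norm_nonneg _) zero_le_one
        _ = M := one_mul M
    exact hdist.trans (Metric.dist_le_diam_of_mem hbdd_im hmem1 hmem2)
  -- Step 10: conclude
  have hfinal := le_delta_of_mem hM fcl hfcl
  have : ca x - 3 * ε ≤ delta x := hca.trans hfinal
  rw [hεdef] at this
  linarith
end

section
/- Let n ∈ ℕ, let X₁, …, X_n be Banach spaces with the c-Schur property (c ≥ 1), and let X = X₁ × ⋯ × X_n carry any norm ‖·‖ satisfying max_j ‖x_j‖ ≤ ‖(x₁,…,x_n)‖ ≤ ∑_j ‖x_j‖. Then X has the nc-Schur property. -/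
open Filter Metric

theorem ca_bddBelow {X : Type*} [PseudoMetricSpace X] (x : ℕ → X) :
    BddBelow (Set.range fun m => Metric.diam (x '' Set.Ici m)) :=
  ⟨0, by rintro _ ⟨m, rfl⟩; exact Metric.diam_nonneg⟩

/-- If `X₁, …, X_n` have the `c`-Schur property (`c ≥ 1`) and `X = X₁ × ⋯ × X_n` carries any
norm satisfying `max_j ‖x_j‖ ≤ ‖(x₁,…,x_n)‖ ≤ ∑_j ‖x_j‖`, then `X` has the `nc`-Schur
property. -/
theorem stmt12 {n : ℕ} (X : Fin n → Type*) [∀ i, NormedAddCommGroup (X i)]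
    [∀ i, NormedSpace ℝ (X i)] [∀ i, CompleteSpace (X i)]
    (c : ℝ) (hc : 1 ≤ c)
    (hX : ∀ i, ∀ x : ℕ → X i, (∃ M : ℝ, ∀ k, ‖x k‖ ≤ M) → ca x ≤ c * delta x)
    {Y : Type*} [NormedAddCommGroup Y] [NormedSpace ℝ Y] [CompleteSpace Y]
    (e : Y ≃ₗ[ℝ] (∀ i, X i))
    (hlow : ∀ (y : Y) (i : Fin n), ‖e y i‖ ≤ ‖y‖)
    (hhigh : ∀ y : Y, ‖y‖ ≤ ∑ i, ‖e y i‖)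
    (y : ℕ → Y) (hy : ∃ M : ℝ, ∀ k, ‖y k‖ ≤ M) :
    ca y ≤ (n * c) * delta y := by
  obtain ⟨M, hM⟩ := hy
  have hM0 : (0:ℝ) ≤ M := le_trans (norm_nonneg _) (hM 0)
  set x : ∀ i : Fin n, ℕ → X i := fun i k => e (y k) i with hxdef
  have hxM : ∀ i k, ‖x i k‖ ≤ M := fun i k => (hlow (y k) i).trans (hM k)
  have hbdd_i : ∀ (i : Fin n) (m : ℕ), Bornology.IsBounded (x i '' Set.Ici m) := by
    intro i m
    apply (Metric.isBounded_closedBall (x := (0 : X i)) (r := M)).subset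
    rintro _ ⟨k, hk, rfl⟩
    simpa [mem_closedBall_zero_iff] using hxM i k
  -- the projection as a continuous linear map of norm ≤ 1
  set π : ∀ i : Fin n, Y →L[ℝ] X i := fun i =>
    LinearMap.mkContinuous ((LinearMap.proj i).comp e.toLinearMap) 1
      (fun z => by simpa using hlow z i) with hπdef
  have hπnorm : ∀ i, ‖π i‖ ≤ 1 := fun i =>
    LinearMap.mkContinuous_norm_le _ zero_le_one _
  -- the delta-set of y is bounded above
  have hSbdd : BddAbove {r : ℝ | ∃ f : Y →L[ℝ] ℝ, ‖f‖ ≤ 1 ∧ r = ca fun k => f (y k)} := by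
    refine ⟨2 * M, ?_⟩
    rintro r ⟨f, hf, rfl⟩
    have h1 : ca (fun k => f (y k)) ≤ Metric.diam ((fun k => f (y k)) '' Set.Ici 0) :=
      ciInf_le (ca_bddBelow _) 0
    refine h1.trans (Metric.diam_le_of_forall_dist_le (by linarith) ?_)
    rintro _ ⟨j, -, rfl⟩ _ ⟨k, -, rfl⟩
    have hb : ∀ k, |f (y k)| ≤ M := by
      intro k
      calc |f (y k)| = ‖f (y k)‖ := rfl
        _ ≤ ‖f‖ * ‖y k‖ := f.le_opNorm _
        _ ≤ 1 * M := by
            exact mul_le_mul hf (hM k) (norm_nonneg _) zero_le_one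
        _ = M := one_mul M
    calc dist (f (y j)) (f (y k)) = |f (y j) - f (y k)| := Real.dist_eq _ _
      _ ≤ |f (y j)| + |f (y k)| := abs_sub _ _
      _ ≤ M + M := add_le_add (hb j) (hb k)
      _ = 2 * M := by ring
  -- delta of each component is at most delta y
  have hdelta : ∀ i, delta (x i) ≤ delta y := by
    intro i
    apply csSup_le_csSup hSbdd
    · exact ⟨ca fun k => (0 : X i →L[ℝ] ℝ) (x i k), 0, by simp, rfl⟩
    · rintro r ⟨f, hf, rfl⟩
      refine ⟨f.comp (π i), ?_, ?_⟩
      · calc ‖f.comp (π i)‖ ≤ ‖f‖ * ‖π i‖ := ContinuousLinearMap.opNorm_comp_le _ _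
          _ ≤ 1 * 1 := mul_le_mul hf (hπnorm i) (norm_nonneg _) zero_le_one
          _ = 1 := one_mul 1
      · rfl
  -- ca y ≤ ∑ ca (x i)
  have hkey : ca y ≤ ∑ i, ca (x i) := by
    refine le_of_forall_pos_le_add (fun ε hε => ?_)
    set ε' : ℝ := ε / (n + 1) with hε'def
    have hε' : 0 < ε' := div_pos hε (by positivity)
    -- choose m i with diam small
    have hchoice : ∀ i : Fin n, ∃ m : ℕ,
        Metric.diam (x i '' Set.Ici m) < ca (x i) + ε' := by
      intro i
      exact exists_lt_of_ciInf_lt (lt_add_of_pos_right _ hε')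
    choose m hm using hchoice
    set m₀ : ℕ := Finset.univ.sup m with hm₀def
    have hmono : ∀ i, Metric.diam (x i '' Set.Ici m₀) ≤ Metric.diam (x i '' Set.Ici (m i)) := by
      intro i
      exact Metric.diam_mono (Set.image_mono (f := x i) (Set.Ici_subset_Ici.2
        (Finset.le_sup (Finset.mem_univ i)))) (hbdd_i i (m i))
    have h1 : ca y ≤ Metric.diam (y '' Set.Ici m₀) := ciInf_le (ca_bddBelow _) m₀
    have h2 : Metric.diam (y '' Set.Ici m₀) ≤ ∑ i, Metric.diam (x i '' Set.Ici m₀) := by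
      refine Metric.diam_le_of_forall_dist_le
        (Finset.sum_nonneg fun i _ => Metric.diam_nonneg) ?_
      rintro _ ⟨j, hj, rfl⟩ _ ⟨k, hk, rfl⟩
      calc dist (y j) (y k) = ‖y j - y k‖ := dist_eq_norm _ _
        _ ≤ ∑ i, ‖e (y j - y k) i‖ := hhigh _
        _ = ∑ i, ‖x i j - x i k‖ := by
            refine Finset.sum_congr rfl fun i _ => ?_
            simp [hxdef, map_sub]
        _ ≤ ∑ i, Metric.diam (x i '' Set.Ici m₀) := by
            refine Finset.sum_le_sum fun i _ => ?_
            rw [← dist_eq_norm]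
            exact Metric.dist_le_diam_of_mem (hbdd_i i m₀)
              ⟨j, hj, rfl⟩ ⟨k, hk, rfl⟩
    have h3 : ∑ i, Metric.diam (x i '' Set.Ici m₀) ≤ ∑ i, (ca (x i) + ε') :=
      Finset.sum_le_sum fun i _ => ((hmono i).trans (hm i).le)
    have h4 : ∑ i, (ca (x i) + ε') = (∑ i, ca (x i)) + n * ε' := by
      rw [Finset.sum_add_distrib]
      simp [mul_comm]
    have h5 : (n : ℝ) * ε' ≤ ε := by
      have hlt : (n : ℝ) * ε' ≤ ((n : ℝ) + 1) * ε' := by nlinarith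
      have heq : ((n : ℝ) + 1) * ε' = ε := by
        rw [hε'def]; field_simp
      linarith
    linarith [h1, h2, h3, h4, h5]
  have hfinal : ∀ i, ca (x i) ≤ c * delta y := by
    intro i
    calc ca (x i) ≤ c * delta (x i) := hX i (x i) ⟨M, hxM i⟩
      _ ≤ c * delta y := mul_le_mul_of_nonneg_left (hdelta i) (by linarith)
  calc ca y ≤ ∑ i, ca (x i) := hkey
    _ ≤ ∑ _i : Fin n, c * delta y := Finset.sum_le_sum fun i _ => hfinal i
    _ = (n * c) * delta y := by
        rw [Finset.sum_const]
        simp only [Finset.card_univ, Fintype.card_fin, nsmul_eq_mul]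
        ring
end

section
/- Let M = ℤ with the metric d(m,n) = 0 if m = n, d(m,n) = 2 if m = −n ≠ 0, and d(m,n) = 1 otherwise. A function f: M → ℝ with f(0) = 0 is 1-Lipschitz with respect to d if and only if either (1) there is c ∈ [0,1] with f(ℤ) ⊆ [c−1, c], or (2) there exist n ∈ ℤ \ {0} and a, b ∈ (0,1] with a + b > 1 such that f(n) = a, f(−n) = −b, and f(ℤ \ {−n, n}) ⊆ [a−1, 1−b]. -/
/-- On `M = ℤ` with `d(m,n) = 0` if `m = n`, `2` if `m = -n ≠ 0` and `1` otherwise, a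
function `f : ℤ → ℝ` with `f 0 = 0` is `1`-Lipschitz iff either (1) `f(ℤ) ⊆ [c-1, c]` for
some `c ∈ [0,1]`, or (2) there are `n ≠ 0` and `a, b ∈ (0,1]` with `a + b > 1` such that
`f(n) = a`, `f(-n) = -b` and `f(ℤ \ {-n,n}) ⊆ [a-1, 1-b]`. -/
theorem stmt13 (f : ℤ → ℝ) (hf0 : f 0 = 0) :
    (∀ m n : ℤ,
        |f m - f n| ≤ (if m = n then (0 : ℝ) else if m = -n ∧ m ≠ 0 then 2 else 1)) ↔
    ((∃ c : ℝ, 0 ≤ c ∧ c ≤ 1 ∧ ∀ k : ℤ, c - 1 ≤ f k ∧ f k ≤ c) ∨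
     (∃ (n : ℤ) (a b : ℝ), n ≠ 0 ∧ 0 < a ∧ a ≤ 1 ∧ 0 < b ∧ b ≤ 1 ∧ 1 < a + b ∧
        f n = a ∧ f (-n) = -b ∧
        ∀ k : ℤ, k ≠ n → k ≠ -n → a - 1 ≤ f k ∧ f k ≤ 1 - b)) := by
  constructor
  · intro H
    -- basic consequences
    have lem1 : ∀ m n : ℤ, m ≠ n → m ≠ -n → |f m - f n| ≤ 1 := by
      intro m n h1 h2
      have := H m n
      rw [if_neg h1, if_neg (by tauto)] at this
      exact this
    have lem2 : ∀ m : ℤ, |f m| ≤ 1 := by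
      intro m
      by_cases hm : m = 0
      · subst hm; simp [hf0]
      · have := lem1 m 0 hm (by simpa using hm)
        simpa [hf0] using this
    by_cases h : ∃ n : ℤ, n ≠ 0 ∧ 1 < |f n - f (-n)|
    · right
      obtain ⟨n, hn, hgt⟩ := h
      -- WLOG f n - f (-n) > 1
      have key : ∃ n : ℤ, n ≠ 0 ∧ 1 < f n - f (-n) := by
        rcases lt_abs.mp hgt with h' | h'
        · exact ⟨n, hn, h'⟩
        · exact ⟨-n, neg_ne_zero.mpr hn, by simpa using h'⟩
      obtain ⟨n, hn, hgt⟩ := key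
      refine ⟨n, f n, -(f (-n)), hn, ?_, ?_, ?_, ?_, ?_, rfl, by ring, ?_⟩
      · have hb := (abs_le.mp (lem2 (-n))).1
        linarith
      · exact (abs_le.mp (lem2 n)).2
      · have ha := (abs_le.mp (lem2 n)).2
        linarith
      · have := (abs_le.mp (lem2 (-n))).1
        linarith
      · linarith
      · intro k hk1 hk2
        have h1 := abs_le.mp (lem1 k n hk1 hk2)
        have h2 := abs_le.mp (lem1 k (-n) hk2 (by simpa using hk1))
        constructor <;> linarith [h1.1, h2.2]
    · left
      push_neg at h
      have key : ∀ m k : ℤ, f m - f k ≤ 1 := by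
        intro m k
        by_cases h1 : m = k
        · simp [h1]
        · by_cases h2 : m = -k
          · subst h2
            by_cases h3 : k = 0
            · simp [h3] at h1
            · have := (abs_le.mp (h (-k) (neg_ne_zero.mpr h3))).2
              simp only [neg_neg] at this
              linarith
          · exact (abs_le.mp (lem1 m k h1 h2)).2
      have bdd : BddAbove (Set.range f) := by
        refine ⟨1, ?_⟩
        rintro _ ⟨k, rfl⟩
        exact (abs_le.mp (lem2 k)).2
      refine ⟨⨆ k, f k, ?_, ?_, fun k => ⟨?_, le_ciSup bdd k⟩⟩
      · have := le_ciSup bdd 0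
        rw [hf0] at this
        exact this
      · exact ciSup_le fun k => (abs_le.mp (lem2 k)).2
      · rw [sub_le_iff_le_add]
        exact ciSup_le fun m => by linarith [key m k]
  · rintro (⟨c, hc0, hc1, hc⟩ | ⟨n, a, b, hn, ha0, ha1, hb0, hb1, hab, hfn, hfmn, hrest⟩) <;>
      intro m k
    · split_ifs with h1 h2
      · simp [h1]
      · have := hc m; have := hc k
        rw [abs_le]; constructor <;> linarith [(hc m).1, (hc m).2, (hc k).1, (hc k).2]
      · rw [abs_le]; constructor <;> linarith [(hc m).1, (hc m).2, (hc k).1, (hc k).2]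
    · split_ifs with h1 h2
      · simp [h1]
      all_goals {
        have hv : ∀ j : ℤ, (f j = a ∧ j = n) ∨ (f j = -b ∧ j = -n) ∨ (a - 1 ≤ f j ∧ f j ≤ 1 - b) := by
          intro j
          by_cases hj1 : j = n
          · exact Or.inl ⟨by rw [hj1, hfn], hj1⟩
          · by_cases hj2 : j = -n
            · exact Or.inr (Or.inl ⟨by rw [hj2, hfmn], hj2⟩)
            · exact Or.inr (Or.inr (hrest j hj1 hj2))
        rcases hv m with ⟨e1, g1⟩ | ⟨e1, g1⟩ | ⟨e1, e1'⟩ <;>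
          rcases hv k with ⟨e2, g2⟩ | ⟨e2, g2⟩ | ⟨e2, e2'⟩ <;>
          rw [abs_le] <;>
          first
            | (exfalso; omega)
            | (constructor <;> linarith)
      }
end

section
/- Let M = ℤ \ {0} with the metric d(m,n) = 3 if m = −n, d(m,n) = 1 if mn < 0 and m ≠ −n, d(m,n) = 2 if mn > 0 and m ≠ n, and d(m,n) = 0 if m = n. If f: M → ℝ is 1-Lipschitz, then there is at most one n ∈ ℕ with f(n) − f(−n) > 1. -/
/-- On `M = ℤ \ {0}` with `d(m,n) = 3` if `m = -n`, `1` if `mn < 0`, `m ≠ -n`, `2` if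
`mn > 0`, `m ≠ n`, and `0` if `m = n`: any `1`-Lipschitz `f : M → ℝ` satisfies
`f(n) - f(-n) > 1` for at most one `n ∈ ℕ`. -/
theorem stmt14 (f : ℤ → ℝ)
    (hf : ∀ m n : ℤ, m ≠ 0 → n ≠ 0 →
      |f m - f n| ≤
        (if m = n then (0 : ℝ) else if m = -n then 3 else if m * n < 0 then 1 else 2)) :
    ∀ m n : ℤ, 0 < m → 0 < n → 1 < f m - f (-m) → 1 < f n - f (-n) → m = n := by
  intro m n hm hn h1 h2
  by_contra hne
  have h3 := hf m (-n) hm.ne' (by omega)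
  have h4 := hf n (-m) hn.ne' (by omega)
  rw [if_neg (by omega), if_neg (by omega), if_pos (by nlinarith)] at h3
  rw [if_neg (by omega), if_neg (by omega), if_pos (by nlinarith)] at h4
  have h3' := abs_le.mp h3
  have h4' := abs_le.mp h4
  linarith [h3'.2, h4'.2]
end

section
/- In the metric space M = (ℤ \ {0}, d) where d(m,n) = 3 if m = −n, 1 if mn < 0 and m ≠ −n, 2 if mn > 0 and m ≠ n, and 0 if m = n, the elements x_n = δ(n) − δ(−n) of the Lipschitz-free space F(M) satisfy ‖x_n − x_m‖ = 4 for all m ≠ n (m, n ∈ ℕ). -/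
/-- In the Lipschitz-free space over `M = (ℤ \ {0}, d)` with `d(m,n) = 3` if `m = -n`, `1` if
`mn < 0`, `m ≠ -n`, `2` if `mn > 0`, `m ≠ n`, and `0` if `m = n`, the elements
`x_n = δ(n) - δ(-n)` satisfy `‖x_n - x_m‖ = 4` for all distinct `m, n ∈ ℕ`.
The free space `F` is axiomatized by its defining duality with `1`-Lipschitz functions
vanishing at the base point, together with density of the span of the Dirac images. -/
theorem stmt15 {M : Type*} [MetricSpace M] (φ : {k : ℤ // k ≠ 0} → M)
    (hφ : Function.Bijective φ)
    (hd : ∀ p q : {k : ℤ // k ≠ 0}, dist (φ p) (φ q) =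
      (if (p : ℤ) = (q : ℤ) then (0 : ℝ) else if (p : ℤ) = -(q : ℤ) then 3
        else if (p : ℤ) * (q : ℤ) < 0 then 1 else 2))
    {F : Type*} [NormedAddCommGroup F] [NormedSpace ℝ F] [CompleteSpace F]
    (δm : M → F) (base : M) (hbase : δm base = 0)
    (hdense : (Submodule.span ℝ (Set.range δm)).topologicalClosure = ⊤)
    (hlip : ∀ g : F →L[ℝ] ℝ, ‖g‖ ≤ 1 → LipschitzWith 1 fun x => g (δm x))
    (hext : ∀ h : M → ℝ, h base = 0 → LipschitzWith 1 h →
      ∃ g : F →L[ℝ] ℝ, ‖g‖ ≤ 1 ∧ ∀ x, g (δm x) = h x)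
    (m n : ℤ) (hm : 0 < m) (hn : 0 < n) (hmn : m ≠ n) :
    ‖(δm (φ ⟨m, by omega⟩) - δm (φ ⟨-m, by omega⟩)) -
      (δm (φ ⟨n, by omega⟩) - δm (φ ⟨-n, by omega⟩))‖ = 4 := by
  set v := (δm (φ ⟨m, by omega⟩) - δm (φ ⟨-m, by omega⟩)) -
      (δm (φ ⟨n, by omega⟩) - δm (φ ⟨-n, by omega⟩)) with hv
  set f : {k : ℤ // k ≠ 0} → ℝ := fun p =>
    if (p : ℤ) = m ∨ (p : ℤ) = -n then 1
    else if (p : ℤ) = -m ∨ (p : ℤ) = n then -1 else 0 with hf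
  have key : ∀ p q : {k : ℤ // k ≠ 0}, |f p - f q| ≤ dist (φ p) (φ q) := by
    intro p q
    rw [hd]
    obtain ⟨p, hp⟩ := p
    obtain ⟨q, hq⟩ := q
    simp only [hf, Subtype.coe_mk]
    split_ifs <;> try norm_num
    all_goals try push_neg at *
    all_goals casesm* _ ∨ _
    all_goals subst_vars
    all_goals first | omega | nlinarith [mul_pos hm hn]
  let e := Equiv.ofBijective φ hφ
  set c : ℝ := f (e.symm base) with hc
  set h : M → ℝ := fun x => f (e.symm x) - c with hh
  have hLip : LipschitzWith 1 h := by
    refine LipschitzWith.of_dist_le_mul fun x y => ?_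
    simp only [hh, one_mul, Real.dist_eq, sub_sub_sub_cancel_right]
    have hx : φ (e.symm x) = x := e.apply_symm_apply x
    have hy : φ (e.symm y) = y := e.apply_symm_apply y
    simpa [hx, hy] using key (e.symm x) (e.symm y)
  obtain ⟨g, hg1, hg2⟩ := hext h (by simp [hh, hc]) hLip
  have hesymm : ∀ p : {k : ℤ // k ≠ 0}, e.symm (φ p) = p := fun p => e.symm_apply_apply p
  have hfm : f ⟨m, by omega⟩ = 1 := by
    simp only [hf, Subtype.coe_mk]; split_ifs <;> first | rfl | omega | tauto
  have hfmm : f ⟨-m, by omega⟩ = -1 := by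
    simp only [hf, Subtype.coe_mk]; split_ifs <;> first | rfl | omega | tauto
  have hfn : f ⟨n, by omega⟩ = -1 := by
    simp only [hf, Subtype.coe_mk]; split_ifs <;> first | rfl | omega | tauto
  have hfnn : f ⟨-n, by omega⟩ = 1 := by
    simp only [hf, Subtype.coe_mk]; split_ifs <;> first | rfl | omega | tauto
  have hgv : g v = 4 := by
    simp only [hv, map_sub, hg2, hh, hesymm, hfm, hfmm, hfn, hfnn]
    ring
  have hlow : (4 : ℝ) ≤ ‖v‖ := by
    calc (4 : ℝ) = g v := hgv.symm
    _ ≤ |g v| := le_abs_self _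
    _ = ‖g v‖ := (Real.norm_eq_abs _).symm
    _ ≤ ‖g‖ * ‖v‖ := g.le_opNorm v
    _ ≤ 1 * ‖v‖ := by gcongr
    _ = ‖v‖ := one_mul _
  have hvne : v ≠ 0 := by
    intro h0
    rw [h0, norm_zero] at hlow
    norm_num at hlow
  obtain ⟨g', hg'1, hg'2⟩ := exists_dual_vector ℝ v (norm_ne_zero_iff.mpr hvne)
  have hL := hlip g' (le_of_eq hg'1)
  have hdist : ∀ p q : {k : ℤ // k ≠ 0},
      |g' (δm (φ p)) - g' (δm (φ q))| ≤ dist (φ p) (φ q) := by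
    intro p q
    have := hL.dist_le_mul (φ p) (φ q)
    simpa [Real.dist_eq] using this
  have d1 : dist (φ (⟨m, by omega⟩ : {k : ℤ // k ≠ 0})) (φ ⟨n, by omega⟩) = 2 := by
    rw [hd]
    rw [if_neg (by simpa using hmn), if_neg (by simp; omega), if_neg (by simp; nlinarith)]
  have d2 : dist (φ (⟨-n, by omega⟩ : {k : ℤ // k ≠ 0})) (φ ⟨-m, by omega⟩) = 2 := by
    rw [hd]
    rw [if_neg (by simp; omega), if_neg (by simp; omega), if_neg (by simp; nlinarith)]
  have h1 := hdist ⟨m, by omega⟩ ⟨n, by omega⟩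
  have h2 := hdist ⟨-n, by omega⟩ ⟨-m, by omega⟩
  rw [d1] at h1
  rw [d2] at h2
  have hup : ‖v‖ ≤ 4 := by
    have hgv' : (g' v : ℝ) = ‖v‖ := by
      have := hg'2
      simpa using this
    rw [← hgv']
    have : g' v = (g' (δm (φ ⟨m, by omega⟩)) - g' (δm (φ ⟨n, by omega⟩))) +
        (g' (δm (φ ⟨-n, by omega⟩)) - g' (δm (φ ⟨-m, by omega⟩))) := by
      simp only [hv, map_sub]; ring
    rw [this]
    have a1 := abs_le.mp h1
    have a2 := abs_le.mp h2
    linarith [a1.2, a2.2]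
  linarith
end
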